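/- arXiv:math/0509519 — 4 statements merged into one kernel-verified Lean document; each statement's English description precedes it below -/
import Mathlib

section
/- Let t be a finite rooted ordered tree with vertices u_0 = root < u_1 < ... < u_{#t-1} listed in lexicographical order, let H_n(t) = |u_n| be the height process and D(t) the Lukasiewicz path defined by D_0(t)=0 and D_{n+1}(t) = D_n(t) + k_{u_n}(t) - 1, where k_u(t) is the number of children of u. Then for every 0 ≤ n < #t, H_n(t) = #{ 0 ≤ j < n : D_j(t) = min_{j ≤ k ≤ n} D_k(t) }. -/
/-!
The Lukasiewicz path counts pending vertices: the children of `u_0, …, u_{n-1}` are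
`u_1, …, u_n` together with the right siblings of `u_n` and of its ancestors, so `D_n` is the
number of the latter. This number can only grow along a line of descent, so `D_j` is a minimum
of `D` on `[j, n]` when `u_j` is an ancestor of `u_n`. Otherwise `u_j = p a r` and `u_n = p b s`
with `a < b`, and the vertex `p (a+1)`, visited in between, has strictly fewer pending vertices.
Hence the records before `n` are the strict ancestors of `u_n`, and there are `|u_n|` of them.
-/

open scoped Classical

/-- A finite rooted ordered tree, encoded as a finite set of finite words of positive
integers: the root is the empty word, the set is closed under taking prefixes, and the
children of a vertex `u` present in the tree are exactly `u++[1], …, u++[k_u]`. -/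
structure OTree where
  verts : Finset (List ℕ)
  root_mem : ([] : List ℕ) ∈ verts
  snoc_mem : ∀ (u : List ℕ) (j : ℕ), u ++ [j] ∈ verts → u ∈ verts ∧ 1 ≤ j
  initial_seg : ∀ (u : List ℕ) (j k : ℕ), u ++ [k] ∈ verts → 1 ≤ j → j ≤ k →
      u ++ [j] ∈ verts

namespace OTree

/-- the number `k_u(t)` of children of the word `u` in the tree `t` -/
noncomputable def kids (t : OTree) (u : List ℕ) : ℕ :=
  (t.verts.filter fun v => u <+: v ∧ v.length = u.length + 1).card

/-- the `n`-th vertex of `t` in the lexicographical order (`u_n`) -/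
noncomputable def vtx (t : OTree) (n : ℕ) : List ℕ :=
  (t.verts.sort (· ≤ ·)).getD n []

/-- the height process of `t` : `H_n(t) = |u_n|` -/
noncomputable def H (t : OTree) (n : ℕ) : ℕ := (t.vtx n).length

/-- the Lukasiewicz path of `t` : `D_0(t)=0`, `D_{n+1}(t)=D_n(t)+k_{u_n}(t)-1` -/
noncomputable def D (t : OTree) (n : ℕ) : ℤ :=
  ∑ j ∈ Finset.range n, ((t.kids (t.vtx j) : ℤ) - 1)

end OTree

open Finset

namespace List

variable {α : Type*} [LinearOrder α] {a b : α} {p u v w : List α}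

-- Core's `IsPrefix.le` concerns core's `≤` on lists, which Mathlib's `LinearOrder` replaces.
theorem le_of_prefix (h : u <+: v) : u ≤ v := not_lt.1 h.le

theorem lt_append_cons (p r : List α) (a : α) : p < p ++ a :: r := by
  simpa using append_left_lt (l₁ := p) (Lex.nil : [] < a :: r)

theorem append_cons_lt_append_cons (hab : a < b) (p r s : List α) :
    p ++ a :: r < p ++ b :: s :=
  append_left_lt (Lex.rel hab)

theorem append_singleton_le_append_cons (hab : a ≤ b) (p r : List α) :
    p ++ [a] ≤ p ++ b :: r := by
  rcases hab.lt_or_eq with hab | rfl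
  · exact (append_cons_lt_append_cons hab p [] r).le
  · exact le_of_prefix ⟨r, by simp⟩

theorem lt_of_append_cons_lt_append_singleton {r : List α} (h : p ++ a :: r < p ++ [b]) :
    a < b :=
  lt_of_not_ge fun hba => (append_singleton_le_append_cons hba p r).not_gt h

theorem prefix_or_exists_branch_of_le (h : u ≤ v) :
    u <+: v ∨ ∃ p a b r s, u = p ++ a :: r ∧ v = p ++ b :: s ∧ a < b := by
  induction u generalizing v with
  | nil => exact Or.inl nil_prefix
  | cons a r ih =>
    match v with
    | [] => exact absurd (nil_lt_cons a r) h.not_gt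
    | b :: s =>
      rcases lt_trichotomy a b with hab | rfl | hab
      · exact Or.inr ⟨[], a, b, r, s, rfl, rfl, hab⟩
      · have hrs : r ≤ s := le_of_not_gt fun hsr => h.not_gt (Lex.cons hsr)
        rcases ih hrs with hp | ⟨p, c, d, r', s', rfl, rfl, hcd⟩
        · exact Or.inl ((prefix_cons_inj a).2 hp)
        · exact Or.inr ⟨a :: p, c, d, r', s', rfl, rfl, hcd⟩
      · exact absurd (Lex.rel hab) h.not_gt

theorem IsPrefix.prefix_of_le_of_le (huw : u <+: w) (huv : u ≤ v) (hvw : v ≤ w) : u <+: v := by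
  rcases prefix_or_exists_branch_of_le huv with h | ⟨p, a, b, r, s, rfl, rfl, hab⟩
  · exact h
  · obtain ⟨e, rfl⟩ := huw
    exact absurd hvw (not_le.2 (by simpa using append_cons_lt_append_cons hab p (r ++ e) s))

end List

namespace OTree

variable (t : OTree) {u v w : List ℕ} {j k n : ℕ}

theorem prefix_mem (hu : u ∈ t.verts) (hv : v <+: u) : v ∈ t.verts := by
  induction u using List.reverseRecOn generalizing v with
  | nil => rw [List.prefix_nil.1 hv]; exact t.root_mem
  | append_singleton u c ih =>
    rcases List.prefix_concat_iff.1 hv with rfl | hv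
    · exact hu
    · exact ih (t.snoc_mem u c hu).1 hv

noncomputable def children (u : List ℕ) : Finset (List ℕ) :=
  t.verts.filter fun v => u <+: v ∧ v.length = u.length + 1

theorem mem_children : v ∈ t.children u ↔ v ∈ t.verts ∧ ∃ c, v = u ++ [c] := by
  simp only [children, mem_filter, and_congr_right_iff]
  refine fun _ => ⟨?_, ?_⟩
  · rintro ⟨⟨e, rfl⟩, he⟩
    obtain ⟨c, rfl⟩ := List.length_eq_one_iff.1 (by simpa using he)
    exact ⟨c, rfl⟩
  · rintro ⟨c, rfl⟩
    exact ⟨List.prefix_append u [c], by simp⟩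

theorem sum_kids_eq_card_biUnion (T : Finset (List ℕ)) :
    ∑ u ∈ T, t.kids u = #(T.biUnion t.children) := by
  refine (card_biUnion fun u _ u' _ hne => disjoint_left.2 fun v hv hv' => hne ?_).symm
  obtain ⟨-, c, rfl⟩ := t.mem_children.1 hv
  obtain ⟨-, c', he⟩ := t.mem_children.1 hv'
  exact (List.append_inj' he rfl).1

/-- The right siblings of `u` and of its ancestors, i.e. the vertices still waiting to be
visited when the depth-first exploration of `t` reaches `u`. -/
noncomputable def pending (u : List ℕ) : Finset (List ℕ) :=
  t.verts.filter fun v => ∃ p a r c, u = p ++ a :: r ∧ v = p ++ [c] ∧ a < c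

theorem lt_of_mem_pending (hv : v ∈ t.pending u) : u < v := by
  obtain ⟨-, p, a, r, c, rfl, rfl, hac⟩ := mem_filter.1 hv
  exact List.append_cons_lt_append_cons hac p r []

theorem pending_mono (h : u <+: w) : t.pending u ⊆ t.pending w := by
  obtain ⟨e, rfl⟩ := h
  intro v hv
  obtain ⟨hvt, p, a, r, c, rfl, rfl, hac⟩ := mem_filter.1 hv
  exact mem_filter.2 ⟨hvt, p, a, r ++ e, c, by simp, rfl, hac⟩

theorem pending_ssubset {p r : List ℕ} {a : ℕ} (hx : p ++ [a + 1] ∈ t.verts) :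
    t.pending (p ++ [a + 1]) ⊂ t.pending (p ++ a :: r) := by
  refine (ssubset_iff_of_subset fun v hv => ?_).2
    ⟨p ++ [a + 1], mem_filter.2 ⟨hx, p, a, r, a + 1, rfl, rfl, a.lt_succ_self⟩,
      fun h => lt_irrefl _ (t.lt_of_mem_pending h)⟩
  obtain ⟨hvt, q, b, s, c, hqs, rfl, hbc⟩ := mem_filter.1 hv
  refine mem_filter.2 ⟨hvt, ?_⟩
  rcases s.eq_nil_or_concat with rfl | ⟨s, d, rfl⟩
  · obtain ⟨rfl, hb⟩ := List.append_inj' hqs rfl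
    exact ⟨p, a, r, c, rfl, rfl, by have := List.singleton_inj.1 hb; omega⟩
  · have hqs : p ++ [a + 1] = (q ++ b :: s) ++ [d] := by simpa using hqs
    obtain ⟨rfl, -⟩ := List.append_inj' hqs rfl
    exact ⟨q, b, s ++ a :: r, c, by simp, rfl, hbc⟩

theorem biUnion_children_filter_lt (hw : w ∈ t.verts) :
    (t.verts.filter (· < w)).biUnion t.children =
      t.verts.filter (fun v => v ≠ [] ∧ v ≤ w) ∪ t.pending w := by
  ext v
  simp only [mem_biUnion, mem_filter, mem_union, t.mem_children]
  constructor
  · rintro ⟨p, ⟨-, hpw⟩, hv, c, rfl⟩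
    rcases le_or_gt (p ++ [c]) w with hle | hlt
    · exact Or.inl ⟨hv, by simp, hle⟩
    · obtain ⟨_ | ⟨a, r⟩, rfl⟩ :=
        (List.prefix_append p [c]).prefix_of_le_of_le hpw.le hlt.le
      · exact absurd hpw (by simp)
      · exact Or.inr (mem_filter.2 ⟨hv, p, a, r, c, rfl, rfl,
          List.lt_of_append_cons_lt_append_singleton hlt⟩)
  · rintro (⟨hv, hne, hle⟩ | hv)
    · have hsplit := List.dropLast_append_getLast hne
      refine ⟨v.dropLast, ⟨(t.snoc_mem _ _ (hsplit ▸ hv)).1, ?_⟩, hv, _, hsplit.symm⟩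
      exact (List.lt_append_cons v.dropLast [] _).trans_le (hsplit ▸ hle)
    · obtain ⟨hvt, p, a, r, c, rfl, rfl, -⟩ := mem_filter.1 hv
      exact ⟨p, ⟨(t.snoc_mem p c hvt).1, List.lt_append_cons p r a⟩, hvt, c, rfl⟩

theorem vtx_eq_orderEmbOfFin (hn : n < #t.verts) :
    t.vtx n = t.verts.orderEmbOfFin rfl ⟨n, hn⟩ := by
  rw [orderEmbOfFin_apply]
  exact List.getD_eq_getElem _ _ _

theorem vtx_mem (hn : n < #t.verts) : t.vtx n ∈ t.verts := by
  rw [t.vtx_eq_orderEmbOfFin hn]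
  exact orderEmbOfFin_mem _ _ _

theorem vtx_lt_vtx_iff (hj : j < #t.verts) (hn : n < #t.verts) :
    t.vtx j < t.vtx n ↔ j < n := by
  rw [t.vtx_eq_orderEmbOfFin hj, t.vtx_eq_orderEmbOfFin hn, OrderEmbedding.lt_iff_lt]
  rfl

theorem vtx_le_vtx_iff (hj : j < #t.verts) (hn : n < #t.verts) :
    t.vtx j ≤ t.vtx n ↔ j ≤ n := by
  rw [t.vtx_eq_orderEmbOfFin hj, t.vtx_eq_orderEmbOfFin hn, OrderEmbedding.le_iff_le]
  rfl

theorem vtx_injOn : Set.InjOn t.vtx (Set.Iio #t.verts) := fun _ hj _ hn h =>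
  le_antisymm ((t.vtx_le_vtx_iff hj hn).1 h.le) ((t.vtx_le_vtx_iff hn hj).1 h.ge)

theorem exists_vtx_eq (hv : v ∈ t.verts) : ∃ n < #t.verts, t.vtx n = v := by
  rw [← mem_coe, ← range_orderEmbOfFin t.verts rfl] at hv
  obtain ⟨⟨n, hn⟩, rfl⟩ := hv
  exact ⟨n, hn, t.vtx_eq_orderEmbOfFin hn⟩

theorem vtx_zero (h : 0 < #t.verts) : t.vtx 0 = [] := by
  obtain ⟨n, hn, hv⟩ := t.exists_vtx_eq t.root_mem
  exact le_antisymm (hv ▸ (t.vtx_le_vtx_iff h hn).2 n.zero_le) (List.le_of_prefix List.nil_prefix)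

theorem image_vtx_range (hn : n < #t.verts) :
    (range n).image t.vtx = t.verts.filter (· < t.vtx n) := by
  ext v
  simp only [mem_image, mem_range, mem_filter]
  constructor
  · rintro ⟨j, hj, rfl⟩
    exact ⟨t.vtx_mem (hj.trans hn), (t.vtx_lt_vtx_iff (hj.trans hn) hn).2 hj⟩
  · rintro ⟨hv, hlt⟩
    obtain ⟨j, hj, rfl⟩ := t.exists_vtx_eq hv
    exact ⟨j, (t.vtx_lt_vtx_iff hj hn).1 hlt, rfl⟩

theorem card_filter_ne_nil_le_vtx (hn : n < #t.verts) :
    #(t.verts.filter fun v => v ≠ [] ∧ v ≤ t.vtx n) = n := by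
  have hroot : t.vtx 0 = [] := t.vtx_zero (n.zero_le.trans_lt hn)
  have himage : (Icc 1 n).image t.vtx = t.verts.filter fun v => v ≠ [] ∧ v ≤ t.vtx n := by
    ext v
    simp only [mem_image, mem_Icc, mem_filter]
    constructor
    · rintro ⟨j, ⟨hj1, hjn⟩, rfl⟩
      have hj := hjn.trans_lt hn
      refine ⟨t.vtx_mem hj, fun h => ?_, (t.vtx_le_vtx_iff hj hn).2 hjn⟩
      have := t.vtx_injOn hj (n.zero_le.trans_lt hn) (h.trans hroot.symm)
      omega
    · rintro ⟨hv, hne, hle⟩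
      obtain ⟨j, hj, rfl⟩ := t.exists_vtx_eq hv
      refine ⟨j, ⟨Nat.one_le_iff_ne_zero.2 fun h => hne (h ▸ hroot), ?_⟩, rfl⟩
      exact (t.vtx_le_vtx_iff hj hn).1 hle
  rw [← himage, card_image_of_injOn, Nat.card_Icc, Nat.add_sub_cancel]
  exact t.vtx_injOn.mono fun j hj => (mem_Icc.1 hj).2.trans_lt hn

theorem D_eq_card_pending (hn : n < #t.verts) : t.D n = #(t.pending (t.vtx n)) := by
  have hdisj : Disjoint (t.verts.filter fun v => v ≠ [] ∧ v ≤ t.vtx n) (t.pending (t.vtx n)) :=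
    disjoint_left.2 fun v hv hp => (t.lt_of_mem_pending hp).not_ge (mem_filter.1 hv).2.2
  have hsum : ∑ j ∈ range n, t.kids (t.vtx j) = n + #(t.pending (t.vtx n)) := by
    rw [← sum_image (t.vtx_injOn.mono fun j hj => (mem_range.1 hj).trans hn),
      t.image_vtx_range hn, sum_kids_eq_card_biUnion, t.biUnion_children_filter_lt (t.vtx_mem hn),
      card_union_of_disjoint hdisj, t.card_filter_ne_nil_le_vtx hn]
  rw [D, sum_sub_distrib, ← Nat.cast_sum, hsum]
  simp

theorem D_le_D_of_prefix (hjk : j ≤ k) (hkn : k ≤ n) (hn : n < #t.verts)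
    (h : t.vtx j <+: t.vtx n) : t.D j ≤ t.D k := by
  have hk := hkn.trans_lt hn
  have hj := hjk.trans_lt hk
  have hjk' : t.vtx j <+: t.vtx k :=
    h.prefix_of_le_of_le ((t.vtx_le_vtx_iff hj hk).2 hjk) ((t.vtx_le_vtx_iff hk hn).2 hkn)
  rw [t.D_eq_card_pending hj, t.D_eq_card_pending hk]
  exact_mod_cast card_le_card (t.pending_mono hjk')

theorem exists_D_lt_of_not_prefix (hjn : j < n) (hn : n < #t.verts)
    (h : ¬ t.vtx j <+: t.vtx n) : ∃ k ∈ Icc j n, t.D k < t.D j := by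
  have hj := hjn.trans hn
  obtain ⟨p, a, b, r, s, hju, hnu, hab⟩ :=
    (List.prefix_or_exists_branch_of_le ((t.vtx_lt_vtx_iff hj hn).2 hjn).le).resolve_left h
  have hx : p ++ [a + 1] ∈ t.verts :=
    t.initial_seg p (a + 1) b (t.prefix_mem (t.vtx_mem hn) ⟨s, by simp [hnu]⟩) (by omega) hab
  obtain ⟨k, hk, hkx⟩ := t.exists_vtx_eq hx
  refine ⟨k, mem_Icc.2 ⟨?_, ?_⟩, ?_⟩
  · refine ((t.vtx_lt_vtx_iff hj hk).1 ?_).le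
    rw [hju, hkx]
    exact List.append_cons_lt_append_cons a.lt_succ_self p r []
  · refine (t.vtx_le_vtx_iff hk hn).1 ?_
    rw [hkx, hnu]
    exact List.append_singleton_le_append_cons hab p s
  · rw [t.D_eq_card_pending hj, t.D_eq_card_pending hk, hju, hkx]
    exact_mod_cast card_lt_card (t.pending_ssubset hx)

theorem forall_D_le_iff_prefix (hjn : j < n) (hn : n < #t.verts) :
    (∀ k ∈ Icc j n, t.D j ≤ t.D k) ↔ t.vtx j <+: t.vtx n := by
  refine ⟨fun hmin => by_contra fun h => ?_, fun h k hk => ?_⟩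
  · obtain ⟨k, hk, hlt⟩ := t.exists_D_lt_of_not_prefix hjn hn h
    exact (hmin k hk).not_gt hlt
  · exact t.D_le_D_of_prefix (mem_Icc.1 hk).1 (mem_Icc.1 hk).2 hn h

theorem card_filter_vtx_prefix (hn : n < #t.verts) :
    #((range n).filter fun j => t.vtx j <+: t.vtx n) = (t.vtx n).length := by
  refine (card_bij (fun j _ => (t.vtx j).length) ?_ ?_ ?_).trans (card_range _)
  · intro j hj
    obtain ⟨hjn, hpre⟩ := mem_filter.1 hj
    have hne := ((t.vtx_lt_vtx_iff ((mem_range.1 hjn).trans hn) hn).2 (mem_range.1 hjn)).ne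
    exact mem_range.2 (hpre.length_le.lt_of_ne fun h => hne (hpre.eq_of_length h))
  · intro j hj j' hj' hlen
    obtain ⟨hjn, hpre⟩ := mem_filter.1 hj
    obtain ⟨hjn', hpre'⟩ := mem_filter.1 hj'
    exact t.vtx_injOn ((mem_range.1 hjn).trans hn) ((mem_range.1 hjn').trans hn)
      ((List.prefix_of_prefix_length_le hpre hpre' hlen.le).eq_of_length hlen)
  · intro b hb
    have hb := mem_range.1 hb
    obtain ⟨j, hj, hvj⟩ := t.exists_vtx_eq (t.prefix_mem (t.vtx_mem hn) (List.take_prefix b _))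
    have hlen : (t.vtx j).length = b := by rw [hvj, List.length_take]; omega
    have hlt : t.vtx j < t.vtx n :=
      (List.le_of_prefix (hvj ▸ List.take_prefix b _)).lt_of_ne fun h => by
        rw [← h] at hb; omega
    refine ⟨j, mem_filter.2 ⟨mem_range.2 ((t.vtx_lt_vtx_iff hj hn).1 hlt), ?_⟩, hlen⟩
    exact hvj ▸ List.take_prefix b _

end OTree

/-- For a finite rooted ordered tree `t`, for every `0 ≤ n < #t`,
`H_n(t) = #{0 ≤ j < n : D_j(t) = min_{j ≤ k ≤ n} D_k(t)}`. -/
theorem height_eq_card_min_records (t : OTree) (n : ℕ) (hn : n < t.verts.card) :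
    t.H n =
      ((Finset.range n).filter fun j => ∀ k ∈ Finset.Icc j n, t.D j ≤ t.D k).card := by
  rw [OTree.H, ← t.card_filter_vtx_prefix hn]
  congr 1
  exact filter_congr fun j hj => (t.forall_D_le_iff_prefix (mem_range.1 hj) hn).symm
end

section
/- Let t be a sin-tree, u_0 < u_1 < ... the vertices of its left part in lexicographical order, f(t) the forest of bushes rooted at the left hand of the infinite line of descent, and H(f(t)) its height process. Let p(n) = #{k < n : u_k ∉ ℓ_∞(t)} be the number of vertices before u_n not on the infinite line of descent, and let α(p) be the height in t of the root of the bush containing the p-th individual of f(t). Then for all n: H̃_n(t) = (n - p(n)) + H_{p(n)}(f(t)), p(n) = inf{p ≥ 0 : p + α(p) ≥ n}, and α(p(n) - 1) ≤ n - p(n) ≤ α(p(n)); moreover if u_n ∉ ℓ_∞(t) then n - p(n) = α(p(n)). -/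
open scoped Classical

/-- A sin-tree: an ordered rooted tree (a prefix-closed set of finite words of positive
integers whose children form initial segments) with a single infinite line of descent,
given by its spine `u*_n = spine n`; a vertex has an infinite subtree iff it lies on
the spine. -/
structure SinTree where
  verts : Set (List ℕ)
  root_mem : ([] : List ℕ) ∈ verts
  snoc_mem : ∀ (u : List ℕ) (j : ℕ), u ++ [j] ∈ verts → u ∈ verts ∧ 1 ≤ j
  initial_seg : ∀ (u : List ℕ) (j k : ℕ), u ++ [k] ∈ verts → 1 ≤ j → j ≤ k →
      u ++ [j] ∈ verts
  spine : ℕ → List ℕ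
  spine_mem : ∀ n, spine n ∈ verts
  spine_len : ∀ n, (spine n).length = n
  spine_step : ∀ n, spine n <+: spine (n + 1)
  spine_char : ∀ u ∈ verts, (Set.Infinite {v ∈ verts | u <+: v} ↔ u ∈ Set.range spine)

/-- the left part of a sin-tree: the vertices lying (lexicographically) at or to the
left of the infinite line of descent -/
def SinTree.leftPart (t : SinTree) : Set (List ℕ) :=
  {u ∈ t.verts | ∃ n, u ≤ t.spine n}

/-!
In lexicographic order the spine vertices preceding `e n` are exactly `spine 0, …, spine (c - 1)`,
where `c = m` if `e n = spine m` and `c = b + 1` if `e n` lies in a bush grafted on `spine b`: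
such a vertex is lexicographically below some `spine n` but is not a prefix of `spine (b + 1)`,
so it leaves the spine to the left. Hence `n - p n`, the number of spine vertices before `e n`,
equals `c`; at a bush vertex this is the height `α` of its bush root, so `α j = nIdx j - j`,
and the claims about `p n` become the Galois connection between `Nat.count` and `Nat.nth`.
At a spine vertex `e n` the next bush vertex is a bush root (the root of its bush lies between
them), so `Hf (p n) = 0` and `|e n| = n - p n`.
-/

namespace List

variable {α : Type*} [LinearOrder α]

theorem IsPrefix.lt_of_ne {u v : List α} (h : u <+: v) (hne : u ≠ v) : u < v :=
  lt_of_le_of_ne (not_lt.mp h.le) hne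

theorem lt_of_le_of_prefix_of_not_prefix {u s x : List α} (h : u ≤ s) (hx : x <+: s)
    (hux : ¬u <+: x) (hxu : ¬x <+: u) : u < x := by
  induction u generalizing s x with
  | nil => exact absurd nil_prefix hux
  | cons a u ih =>
    obtain rfl | h := h.eq_or_lt
    · exact absurd hx hxu
    obtain _ | ⟨b, x⟩ := x
    · exact absurd nil_prefix hxu
    obtain ⟨s, rfl⟩ : ∃ s', s = b :: s' := by
      obtain ⟨w, rfl⟩ := hx
      exact ⟨x ++ w, rfl⟩
    rcases cons_lt_cons_iff.mp h with hab | ⟨rfl, hus⟩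
    · exact cons_lt_cons_iff.mpr (Or.inl hab)
    · rw [prefix_cons_inj] at hux hxu hx
      exact cons_lt_cons_iff.mpr (Or.inr ⟨rfl, ih hus.le hx hux hxu⟩)

end List

namespace SinTree

variable (t : SinTree)

theorem spine_prefix_spine {i j : ℕ} (h : i ≤ j) : t.spine i <+: t.spine j := by
  induction j, h using Nat.le_induction with
  | base => exact List.prefix_refl _
  | succ j _ ih => exact ih.trans (t.spine_step j)

theorem spine_strictMono : StrictMono t.spine := fun i j h =>
  (t.spine_prefix_spine h.le).lt_of_ne fun he => by
    simpa [t.spine_len, h.ne] using congrArg List.length he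

theorem eq_spine_length_of_prefix_spine {u : List ℕ} {i : ℕ} (h : u <+: t.spine i) :
    u = t.spine u.length := by
  have hle : u.length ≤ i := by simpa [t.spine_len] using h.length_le
  exact (List.prefix_of_prefix_length_le h (t.spine_prefix_spine hle)
    (by rw [t.spine_len])).eq_of_length (by rw [t.spine_len])

theorem mem_verts_of_prefix {u v : List ℕ} (hv : v ∈ t.verts) (h : u <+: v) : u ∈ t.verts := by
  induction v using List.reverseRecOn with
  | nil => rwa [List.prefix_nil.mp h]
  | append_singleton w a ih =>
    rcases eq_or_lt_of_le h.length_le with hl | hl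
    · rwa [h.eq_of_length hl]
    · refine ih (t.snoc_mem w a hv).1 ?_
      have hl : u.length ≤ w.length := by simpa [Nat.lt_succ_iff] using hl
      simpa using List.prefix_take_iff.mpr ⟨h, hl⟩

/-- The height of the last ancestor of `u` on the infinite line of descent. -/
noncomputable def branchHeight (u : List ℕ) : ℕ := sSup {m | t.spine m <+: u}

theorem spine_prefix_iff_le_branchHeight {u : List ℕ} {i : ℕ} :
    t.spine i <+: u ↔ i ≤ t.branchHeight u := by
  have hbdd : BddAbove {m | t.spine m <+: u} :=
    ⟨u.length, fun m hm => by simpa [t.spine_len] using hm.length_le⟩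
  have hmem : t.spine (t.branchHeight u) <+: u := by
    refine Nat.sSup_mem ⟨0, ?_⟩ hbdd
    simp [List.length_eq_zero_iff.mp (t.spine_len 0)]
  exact ⟨fun h => le_csSup hbdd h, fun h => (t.spine_prefix_spine h).trans hmem⟩

theorem branchHeight_lt_length {u : List ℕ} (hu : u ∉ Set.range t.spine) :
    t.branchHeight u < u.length := by
  have h : t.spine (t.branchHeight u) <+: u := t.spine_prefix_iff_le_branchHeight.mpr le_rfl
  refine lt_of_le_of_ne (by simpa [t.spine_len] using h.length_le) fun hl => hu ?_
  exact ⟨_, h.eq_of_length (by rw [t.spine_len, hl])⟩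

theorem spine_lt_iff_le_branchHeight {u : List ℕ} (hu : u ∈ t.leftPart)
    (hns : u ∉ Set.range t.spine) {i : ℕ} : t.spine i < u ↔ i ≤ t.branchHeight u := by
  refine ⟨fun h => ?_, fun hi =>
    (t.spine_prefix_iff_le_branchHeight.mpr hi).lt_of_ne fun he => hns ⟨i, he⟩⟩
  by_contra! hi
  obtain ⟨n, hn⟩ := hu.2
  have hlt : u < t.spine i := by
    rcases le_or_gt i n with hin | hni
    · refine List.lt_of_le_of_prefix_of_not_prefix hn (t.spine_prefix_spine hin) ?_ ?_
      · exact fun hpre => hns ⟨_, (t.eq_spine_length_of_prefix_spine hpre).symm⟩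
      · rwa [t.spine_prefix_iff_le_branchHeight, not_le]
    · exact hn.trans_lt (t.spine_strictMono hni)
  exact lt_asymm h hlt

/-- The root of the bush (subtree grafted on the infinite line of descent) containing `u`. -/
noncomputable def bushRoot (u : List ℕ) : List ℕ := u.take (t.branchHeight u + 1)

theorem bushRoot_prefix (u : List ℕ) : t.bushRoot u <+: u := List.take_prefix _ _

theorem length_bushRoot {u : List ℕ} (hns : u ∉ Set.range t.spine) :
    (t.bushRoot u).length = t.branchHeight u + 1 := by
  have := t.branchHeight_lt_length hns
  simp only [bushRoot, List.length_take]
  omega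

theorem bushRoot_not_mem_range_spine {u : List ℕ} (hns : u ∉ Set.range t.spine) :
    t.bushRoot u ∉ Set.range t.spine := by
  rintro ⟨j, hj⟩
  have hjlen : j = t.branchHeight u + 1 := by
    rw [← t.spine_len j, hj, t.length_bushRoot hns]
  have := t.spine_prefix_iff_le_branchHeight.mp (hj ▸ t.bushRoot_prefix u)
  omega

theorem bushRoot_mem_leftPart {u : List ℕ} (hu : u ∈ t.leftPart) : t.bushRoot u ∈ t.leftPart := by
  obtain ⟨n, hn⟩ := hu.2
  exact ⟨t.mem_verts_of_prefix hu.1 (t.bushRoot_prefix u),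
    n, (not_lt.mp (t.bushRoot_prefix u).le).trans hn⟩

theorem spine_lt_bushRoot {u : List ℕ} (hns : u ∉ Set.range t.spine) {i : ℕ}
    (hi : i ≤ t.branchHeight u) : t.spine i < t.bushRoot u := by
  refine (List.IsPrefix.lt_of_ne ?_ fun he => t.bushRoot_not_mem_range_spine hns ⟨i, he⟩)
  refine List.prefix_take_iff.mpr ⟨t.spine_prefix_iff_le_branchHeight.mpr hi, ?_⟩
  rw [t.spine_len]
  omega

end SinTree

theorem Nat.count_add_count_not (p : ℕ → Prop) [DecidablePred p] (n : ℕ) :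
    Nat.count p n + Nat.count (fun k => ¬p k) n = n := by
  simp only [Nat.count_eq_card_filter_range]
  simpa using Finset.card_filter_add_card_filter_not (s := Finset.range n) p

theorem Nat.count_eq_sInf_le_nth {p : ℕ → Prop} [DecidablePred p] (hp : (Set.ofPred p).Infinite)
    (n : ℕ) : Nat.count p n = sInf {j | n ≤ Nat.nth p j} := by
  have : {j | n ≤ Nat.nth p j} = Set.Ici (Nat.count p n) := by
    ext j
    exact (Nat.count_le_iff_le_nth hp).symm
  rw [this, csInf_Ici]

theorem StrictMono.count_mem_eq_ncard {β : Type*} [LinearOrder β] {e : ℕ → β} (he : StrictMono e)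
    {T : Set β} [DecidablePred (· ∈ T)] (hT : T ⊆ Set.range e) (n : ℕ) :
    Nat.count (fun k => e k ∈ T) n = {x ∈ T | x < e n}.ncard := by
  rw [Nat.count_eq_card_filter_range, ← Set.ncard_coe_finset,
    ← Set.ncard_image_of_injective _ he.injective]
  congr 1
  ext x
  constructor
  · rintro ⟨k, hk, rfl⟩
    simp only [Finset.coe_filter, Finset.mem_range, Set.mem_ofPred_eq] at hk
    exact ⟨hk.2, he hk.1⟩
  · rintro ⟨hxT, hxn⟩
    obtain ⟨k, rfl⟩ := hT hxT
    exact ⟨k, by simpa using ⟨he.lt_iff_lt.mp hxn, hxT⟩, rfl⟩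

namespace SinTree

variable {t : SinTree} {e : ℕ → List ℕ}

theorem sub_count_eq_of_forall_spine_lt_iff (he : StrictMono e)
    (hrange : Set.range e = t.leftPart) {n c : ℕ} (hc : ∀ i, t.spine i < e n ↔ i < c) :
    n - Nat.count (fun k => e k ∉ Set.range t.spine) n = c := by
  have hsub : Set.range t.spine ⊆ Set.range e := by
    rintro _ ⟨i, rfl⟩
    exact hrange ▸ ⟨t.spine_mem i, i, le_rfl⟩
  have hset : {x ∈ Set.range t.spine | x < e n} = t.spine '' Set.Iio c := by
    ext x
    constructor
    · rintro ⟨⟨i, rfl⟩, hi⟩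
      exact ⟨i, (hc i).mp hi, rfl⟩
    · rintro ⟨i, hi, rfl⟩
      exact ⟨⟨i, rfl⟩, (hc i).mpr hi⟩
  have hcount := he.count_mem_eq_ncard hsub n
  rw [hset, Set.ncard_image_of_injective _ t.spine_strictMono.injective,
    Set.ncard_Iio_nat] at hcount
  have := Nat.count_add_count_not (fun k => e k ∉ Set.range t.spine) n
  simp only [not_not] at this
  omega

theorem sub_count_eq_of_eq_spine (he : StrictMono e) (hrange : Set.range e = t.leftPart)
    {n m : ℕ} (hm : e n = t.spine m) :
    n - Nat.count (fun k => e k ∉ Set.range t.spine) n = m :=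
  sub_count_eq_of_forall_spine_lt_iff he hrange fun _ => hm ▸ t.spine_strictMono.lt_iff_lt

theorem sub_count_eq_branchHeight_add_one (he : StrictMono e)
    (hrange : Set.range e = t.leftPart) {n : ℕ} (hn : e n ∉ Set.range t.spine) :
    n - Nat.count (fun k => e k ∉ Set.range t.spine) n = t.branchHeight (e n) + 1 :=
  sub_count_eq_of_forall_spine_lt_iff he hrange fun _ =>
    (t.spine_lt_iff_le_branchHeight (hrange ▸ ⟨n, rfl⟩) hn).trans Nat.lt_succ_iff.symm

theorem infinite_setOf_not_mem_range_spine (hrange : Set.range e = t.leftPart)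
    (hbushes : (t.leftPart \ Set.range t.spine).Infinite) :
    (Set.ofPred fun k => e k ∉ Set.range t.spine).Infinite := by
  refine Set.Infinite.of_image e (hbushes.mono ?_)
  rintro u ⟨hu, hns⟩
  obtain ⟨k, rfl⟩ := hrange ▸ hu
  exact ⟨k, hns, rfl⟩

/-- The first bush vertex after a spine vertex is the root of its bush. -/
theorem length_eq_branchHeight_add_one_of_mem_range_spine (he : StrictMono e)
    (hrange : Set.range e = t.leftPart)
    (hQ : (Set.ofPred fun k => e k ∉ Set.range t.spine).Infinite) {n k : ℕ}
    (hn : e n ∈ Set.range t.spine)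
    (hk : k = Nat.nth (fun k => e k ∉ Set.range t.spine)
      (Nat.count (fun k => e k ∉ Set.range t.spine) n)) :
    (e k).length = t.branchHeight (e k) + 1 := by
  have hkQ : e k ∉ Set.range t.spine := hk ▸ Nat.nth_mem_of_infinite hQ _
  have hnk : n < k := (hk ▸ Nat.le_nth_count hQ n).lt_of_ne (by rintro rfl; exact hkQ hn)
  obtain ⟨m, hm⟩ := hn
  have hmk : m ≤ t.branchHeight (e k) :=
    (t.spine_lt_iff_le_branchHeight (hrange ▸ ⟨k, rfl⟩) hkQ).mp (hm ▸ he hnk)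
  obtain ⟨k', hk'⟩ := hrange ▸ t.bushRoot_mem_leftPart (hrange ▸ ⟨k, rfl⟩ : e k ∈ t.leftPart)
  have hnk' : n < k' := he.lt_iff_lt.mp (hm ▸ hk' ▸ t.spine_lt_bushRoot hkQ hmk)
  have hk'k : k' ≤ k := he.le_iff_le.mp (hk' ▸ not_lt.mp (t.bushRoot_prefix (e k)).le)
  have hkk' : k ≤ k' := by
    rw [hk, Nat.nth_count_eq_sInf]
    exact Nat.sInf_le ⟨hk' ▸ t.bushRoot_not_mem_range_spine hkQ, hnk'.le⟩
  obtain rfl := le_antisymm hk'k hkk'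
  have := t.length_bushRoot hkQ
  rwa [← hk'] at this

theorem length_eq_sub_count_add (he : StrictMono e) (hrange : Set.range e = t.leftPart)
    (hQ : (Set.ofPred fun k => e k ∉ Set.range t.spine).Infinite) {n k : ℕ}
    (hk : k = Nat.nth (fun k => e k ∉ Set.range t.spine)
      (Nat.count (fun k => e k ∉ Set.range t.spine) n)) :
    (e n).length = (n - Nat.count (fun k => e k ∉ Set.range t.spine) n) +
      ((e k).length - (t.branchHeight (e k) + 1)) := by
  by_cases hn : e n ∈ Set.range t.spine
  · obtain ⟨m, hm⟩ := hn
    rw [length_eq_branchHeight_add_one_of_mem_range_spine he hrange hQ ⟨m, hm⟩ hk,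
      sub_count_eq_of_eq_spine he hrange hm.symm, ← hm, t.spine_len, Nat.sub_self, add_zero]
  · have := t.branchHeight_lt_length hn
    rw [hk, Nat.nth_count hn, sub_count_eq_branchHeight_add_one he hrange hn]
    omega

end SinTree

/-- `e` enumerates the left part lexicographically, so `(e n).length` is `H̃_n(t)`, and
`nIdx j` is the index in `e` of the `j`-th individual of `f(t)`. -/
theorem sin_tree_spinal_decomposition
    (t : SinTree) (e : ℕ → List ℕ) (he : StrictMono e)
    (hrange : Set.range e = t.leftPart)
    (hbushes : Set.Infinite (t.leftPart \ Set.range t.spine))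
    (p : ℕ → ℕ)
    (hp : ∀ n, p n = ((Finset.range n).filter fun k => e k ∉ Set.range t.spine).card)
    (nIdx : ℕ → ℕ) (hnIdx : nIdx = Nat.nth (fun k => e k ∉ Set.range t.spine))
    (α : ℕ → ℕ)
    (hα : ∀ j, α j = sSup {m | t.spine m <+: e (nIdx j)} + 1)
    (Hf : ℕ → ℕ) (hHf : ∀ j, Hf j = (e (nIdx j)).length - α j) :
    (∀ n, (e n).length = (n - p n) + Hf (p n)) ∧
    (∀ n, p n = sInf {j | n ≤ j + α j}) ∧
    (∀ n, n - p n ≤ α (p n)) ∧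
    (∀ n, 1 ≤ p n → α (p n - 1) ≤ n - p n) ∧
    (∀ n, e n ∉ Set.range t.spine → n - p n = α (p n)) := by
  set Q := fun k => e k ∉ Set.range t.spine
  have hQ : (Set.ofPred Q).Infinite := SinTree.infinite_setOf_not_mem_range_spine hrange hbushes
  obtain rfl : p = Nat.count Q := funext fun n => by rw [hp, Nat.count_eq_card_filter_range]
  subst hnIdx
  have hα_nth : ∀ j, α j = Nat.nth Q j - j := fun j => by
    have := SinTree.sub_count_eq_branchHeight_add_one he hrange (Nat.nth_mem_of_infinite hQ j)
    rw [Nat.count_nth_of_infinite hQ] at this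
    exact (hα j).trans this.symm
  refine ⟨fun n => ?_, fun n => ?_, fun n => ?_, fun n hn => ?_, fun n hn => ?_⟩
  · rw [hHf, hα]
    exact SinTree.length_eq_sub_count_add he hrange hQ rfl
  · rw [Nat.count_eq_sInf_le_nth hQ]
    congr 1
    ext j
    have hj : j ≤ Nat.nth Q j := (Nat.nth_strictMono hQ).id_le j
    rw [Set.mem_ofPred_eq, Set.mem_ofPred_eq, hα_nth, Nat.add_sub_cancel' hj]
  · rw [hα_nth]
    have := Nat.le_nth_count hQ n
    omega
  · rw [hα_nth]
    have := Nat.nth_lt_of_lt_count (p := Q) (n := n) (k := Nat.count Q n - 1) (by omega)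
    omega
  · rw [hα_nth, Nat.nth_count hn]
end

section
/- Let ψ be a (sub)critical branching mechanism satisfying the Grey condition, u(a,λ) its cumulant semigroup and v(a) = lim_{λ→∞} u(a,λ). Then for fixed b > 0: (i) v(a) = u(b, v(a-b)) for all a > b; (ii) lim_{a→∞} v(a-b)/v(a) = e^{αb}, where α = ψ'(0). -/
open MeasureTheory Filter intervalIntegral
open scoped ENNReal Topology

/-!
Both `v` and `u(b, ·)` are read off the primitive of `1/ψ`: `v a` is the point whose tail integral
over `(v a, ∞)` is `a`, and `u b λ` the point from which the integral up to `λ` is `b`. The tail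
integral is strictly decreasing, so additivity of the integral gives `v a = u b (v (a - b))`.
For the limit, `v (a - b) → 0`, and near `0` the mechanism is `ψ x = (α + o(1)) x` (dominated
convergence in the Lévy integral), so `b = ∫_{u b λ}^λ dx / ψ x = (α + o(1))⁻¹ log (λ / u b λ)`
as `λ → 0`, whence `λ / u b λ → exp (α b)`.
-/

open Set

namespace Real

lemma exp_neg_sub_one_add_le_min {y : ℝ} (hy : 0 ≤ y) : exp (-y) - 1 + y ≤ min (y ^ 2) y := by
  have hexp : exp (-y) ≤ 1 := exp_le_one_iff.2 (neg_nonpos.2 hy)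
  refine le_min ?_ (by linarith)
  rcases le_or_gt y 1 with hy1 | hy1
  · have h := abs_exp_sub_one_sub_id_le (x := -y) (by rwa [abs_neg, abs_of_nonneg hy])
    rw [neg_sq] at h
    linarith [le_abs_self (exp (-y) - 1 - -y)]
  · nlinarith

lemma monotoneOn_exp_neg_add : MonotoneOn (fun y => exp (-y) + y) (Ici 0) := by
  intro s hs t _ hst
  have hexp : exp (-s) ≤ 1 := exp_le_one_iff.2 (neg_nonpos.2 hs)
  have hts : exp (-s) * (1 - (t - s)) ≤ exp (-t) :=
    calc exp (-s) * (1 - (t - s)) ≤ exp (-s) * exp (-(t - s)) :=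
          mul_le_mul_of_nonneg_left (by linarith [add_one_le_exp (-(t - s))]) (exp_pos _).le
      _ = exp (-t) := by rw [← exp_add]; ring_nf
  dsimp only
  nlinarith [exp_pos (-s)]

end Real

lemma exp_neg_mul_sub_one_add_mul_nonneg (x r : ℝ) : 0 ≤ Real.exp (-x * r) - 1 + x * r := by
  linarith [Real.add_one_le_exp (-x * r)]

lemma exp_neg_mul_sub_one_add_mul_le {x r : ℝ} (hx : 0 ≤ x) (hr : 0 ≤ r) :
    Real.exp (-x * r) - 1 + x * r ≤ max x (x ^ 2) * min r (r ^ 2) := by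
  have h := Real.exp_neg_sub_one_add_le_min (mul_nonneg hx hr)
  rw [← neg_mul] at h
  rcases le_total r 1 with hr1 | hr1
  · rw [min_eq_right (by nlinarith)]
    nlinarith [le_max_right x (x ^ 2), min_le_left ((x * r) ^ 2) (x * r), sq_nonneg r]
  · rw [min_eq_left (by nlinarith)]
    nlinarith [le_max_left x (x ^ 2), min_le_right ((x * r) ^ 2) (x * r)]

noncomputable def branchingMechanism (α β : ℝ) (π : Measure ℝ) (x : ℝ) : ℝ :=
  α * x + β * x ^ 2 + ∫ r, (Real.exp (-x * r) - 1 + x * r) ∂π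

section BranchingMechanism

variable {α β : ℝ} {π : Measure ℝ}

lemma integrable_exp_neg_mul_sub_one_add_mul (hπ : ∀ᵐ r ∂π, 0 < r)
    (hπint : Integrable (fun r => min r (r ^ 2)) π) {x : ℝ} (hx : 0 ≤ x) :
    Integrable (fun r => Real.exp (-x * r) - 1 + x * r) π := by
  refine (hπint.const_mul (max x (x ^ 2))).mono' (Continuous.aestronglyMeasurable (by fun_prop)) ?_
  filter_upwards [hπ] with r hr
  rw [Real.norm_eq_abs, abs_of_nonneg (exp_neg_mul_sub_one_add_mul_nonneg x r)]
  exact exp_neg_mul_sub_one_add_mul_le hx hr.le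

lemma monotoneOn_branchingMechanism (hα : 0 ≤ α) (hβ : 0 ≤ β) (hπ : ∀ᵐ r ∂π, 0 < r)
    (hπint : Integrable (fun r => min r (r ^ 2)) π) :
    MonotoneOn (branchingMechanism α β π) (Ici 0) := by
  intro x hx y hy hxy
  have hlevy : ∫ r, (Real.exp (-x * r) - 1 + x * r) ∂π ≤
      ∫ r, (Real.exp (-y * r) - 1 + y * r) ∂π := by
    refine integral_mono_ae (integrable_exp_neg_mul_sub_one_add_mul hπ hπint hx)
      (integrable_exp_neg_mul_sub_one_add_mul hπ hπint hy) ?_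
    filter_upwards [hπ] with r hr
    have h := Real.monotoneOn_exp_neg_add (mul_nonneg (mem_Ici.1 hx) hr.le)
      (mul_nonneg (mem_Ici.1 hy) hr.le) (mul_le_mul_of_nonneg_right hxy hr.le)
    simp only [neg_mul] at h ⊢
    linarith
  have hsq : x ^ 2 ≤ y ^ 2 := pow_le_pow_left₀ (mem_Ici.1 hx) hxy 2
  unfold branchingMechanism
  nlinarith [mul_le_mul_of_nonneg_left hxy hα, mul_le_mul_of_nonneg_left hsq hβ]

lemma tendsto_integral_exp_neg_mul_sub_one_add_mul_div (hπ : ∀ᵐ r ∂π, 0 < r)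
    (hπint : Integrable (fun r => min r (r ^ 2)) π) :
    Tendsto (fun x => ∫ r, (Real.exp (-x * r) - 1 + x * r) / x ∂π) (𝓝[>] 0) (𝓝 0) := by
  have hlim := tendsto_integral_filter_of_dominated_convergence (μ := π) (l := 𝓝[>] (0 : ℝ))
    (F := fun x r => (Real.exp (-x * r) - 1 + x * r) / x) (f := fun _ => 0)
    (fun r => min r (r ^ 2))
    (Eventually.of_forall fun x => (by fun_prop : Continuous _).aestronglyMeasurable)
    ?_ hπint ?_
  · simpa using hlim
  · filter_upwards [Ioc_mem_nhdsGT one_pos] with x hx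
    filter_upwards [hπ] with r hr
    have h := exp_neg_mul_sub_one_add_mul_le hx.1.le hr.le
    rw [max_eq_left (by nlinarith [hx.1, hx.2])] at h
    rw [Real.norm_eq_abs,
      abs_of_nonneg (div_nonneg (exp_neg_mul_sub_one_add_mul_nonneg x r) hx.1.le), div_le_iff₀ hx.1]
    linarith
  · filter_upwards [hπ] with r hr
    have hbound : Tendsto (fun x : ℝ => x * r ^ 2) (𝓝[>] 0) (𝓝 0) :=
      tendsto_nhdsWithin_of_tendsto_nhds (by simpa using (continuous_mul_const (r ^ 2)).tendsto 0)
    refine squeeze_zero' ?_ ?_ hbound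
    · filter_upwards [self_mem_nhdsWithin] with x hx
      exact div_nonneg (exp_neg_mul_sub_one_add_mul_nonneg x r) (le_of_lt hx)
    · filter_upwards [self_mem_nhdsWithin] with x (hx : 0 < x)
      have h := (Real.exp_neg_sub_one_add_le_min (mul_nonneg hx.le hr.le)).trans (min_le_left _ _)
      rw [← neg_mul] at h
      rw [div_le_iff₀ hx]
      nlinarith

lemma tendsto_branchingMechanism_div_nhdsGT_zero (hπ : ∀ᵐ r ∂π, 0 < r)
    (hπint : Integrable (fun r => min r (r ^ 2)) π) :
    Tendsto (fun x => branchingMechanism α β π x / x) (𝓝[>] 0) (𝓝 α) := by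
  have hlin : Tendsto (fun x : ℝ => α + β * x) (𝓝[>] 0) (𝓝 α) :=
    tendsto_nhdsWithin_of_tendsto_nhds <| by
      simpa using ((continuous_const_mul β).const_add α).tendsto 0
  have hsum := hlin.add (tendsto_integral_exp_neg_mul_sub_one_add_mul_div hπ hπint)
  rw [add_zero] at hsum
  refine hsum.congr' ?_
  filter_upwards [self_mem_nhdsWithin] with x (hx : 0 < x)
  rw [MeasureTheory.integral_div, branchingMechanism]
  field_simp

end BranchingMechanism

lemma integral_inv_const_mul {c m l : ℝ} (hm : 0 < m) (hl : 0 < l) :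
    ∫ x in m..l, (c * x)⁻¹ = c⁻¹ * Real.log (l / m) := by
  simp_rw [mul_inv]
  rw [intervalIntegral.integral_const_mul, integral_inv_of_pos hm hl]

section IntegralInv

variable {ψ : ℝ → ℝ} {m l : ℝ}

lemma mul_integral_inv_le_log {c : ℝ} (hm : 0 < m) (hml : m ≤ l)
    (hψ : IntervalIntegrable (fun x => (ψ x)⁻¹) volume m l) (hpos : ∀ x ∈ Icc m l, 0 < ψ x)
    (hc : ∀ x ∈ Icc m l, c * x ≤ ψ x) :
    c * ∫ x in m..l, (ψ x)⁻¹ ≤ Real.log (l / m) := by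
  rcases le_or_gt c 0 with hc0 | hc0
  · have hI : 0 ≤ ∫ x in m..l, (ψ x)⁻¹ := integral_nonneg hml fun x hx => (inv_pos.2 (hpos x hx)).le
    exact (mul_nonpos_of_nonpos_of_nonneg hc0 hI).trans (Real.log_nonneg ((one_le_div hm).2 hml))
  · have hcx : IntervalIntegrable (fun x => (c * x)⁻¹) volume m l :=
      intervalIntegrable_inv (fun x hx => by
        rw [uIcc_of_le hml] at hx; exact (mul_pos hc0 (hm.trans_le hx.1)).ne') (by fun_prop)
    have hI := integral_mono_on hml hψ hcx fun x hx =>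
      inv_anti₀ (mul_pos hc0 (hm.trans_le hx.1)) (hc x hx)
    rw [integral_inv_const_mul hm (hm.trans_le hml)] at hI
    calc c * ∫ x in m..l, (ψ x)⁻¹ ≤ c * (c⁻¹ * Real.log (l / m)) :=
          mul_le_mul_of_nonneg_left hI hc0.le
      _ = Real.log (l / m) := by field_simp

lemma log_le_mul_integral_inv {C : ℝ} (hm : 0 < m) (hml : m ≤ l)
    (hψ : IntervalIntegrable (fun x => (ψ x)⁻¹) volume m l) (hpos : ∀ x ∈ Icc m l, 0 < ψ x)
    (hC : ∀ x ∈ Icc m l, ψ x ≤ C * x) :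
    Real.log (l / m) ≤ C * ∫ x in m..l, (ψ x)⁻¹ := by
  have hmI : m ∈ Icc m l := ⟨le_rfl, hml⟩
  have hC0 : 0 < C := pos_of_mul_pos_left ((hpos m hmI).trans_le (hC m hmI)) hm.le
  have hcx : IntervalIntegrable (fun x => (C * x)⁻¹) volume m l :=
    intervalIntegrable_inv (fun x hx => by
      rw [uIcc_of_le hml] at hx; exact (mul_pos hC0 (hm.trans_le hx.1)).ne') (by fun_prop)
  have hI := integral_mono_on hml hcx hψ fun x hx => inv_anti₀ (hpos x hx) (hC x hx)
  rw [integral_inv_const_mul hm (hm.trans_le hml)] at hI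
  calc Real.log (l / m) = C * (C⁻¹ * Real.log (l / m)) := by field_simp
    _ ≤ C * ∫ x in m..l, (ψ x)⁻¹ := mul_le_mul_of_nonneg_left hI hC0.le

end IntegralInv

lemma tendsto_div_of_integral_inv_eq {ψ u : ℝ → ℝ} {α b : ℝ} (hb : 0 < b)
    (hpos : ∀ x > 0, 0 < ψ x)
    (hψ : ∀ m l, 0 < m → 0 < l → IntervalIntegrable (fun x => (ψ x)⁻¹) volume m l)
    (hderiv : Tendsto (fun x => ψ x / x) (𝓝[>] 0) (𝓝 α))
    (hu : ∀ l > 0, 0 < u l ∧ u l ≤ l ∧ ∫ x in u l..l, (ψ x)⁻¹ = b) :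
    Tendsto (fun l => l / u l) (𝓝[>] 0) (𝓝 (Real.exp (α * b))) := by
  have hlog : Tendsto (fun l => Real.log (l / u l)) (𝓝[>] 0) (𝓝 (α * b)) := by
    refine Metric.tendsto_nhds.2 fun ε hε => ?_
    obtain ⟨δ, hδ, hψδ⟩ := mem_nhdsGT_iff_exists_Ioo_subset.1
      (Metric.tendsto_nhds.1 hderiv (ε / (2 * b)) (by positivity))
    filter_upwards [Ioo_mem_nhdsGT hδ] with l hl
    obtain ⟨hm, hml, hI⟩ := hu l hl.1
    have hIcc : ∀ x ∈ Icc (u l) l, |ψ x / x - α| < ε / (2 * b) := fun x hx =>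
      hψδ ⟨hm.trans_le hx.1, hx.2.trans_lt hl.2⟩
    have hposIcc : ∀ x ∈ Icc (u l) l, 0 < ψ x := fun x hx => hpos x (hm.trans_le hx.1)
    have hlower := mul_integral_inv_le_log (c := α - ε / (2 * b)) hm hml (hψ _ _ hm hl.1) hposIcc
      fun x hx => by
        have hx0 := hm.trans_le hx.1
        have := (abs_lt.1 (hIcc x hx)).1
        rw [lt_sub_iff_add_lt, lt_div_iff₀ hx0] at this
        linarith
    have hupper := log_le_mul_integral_inv (C := α + ε / (2 * b)) hm hml (hψ _ _ hm hl.1) hposIcc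
      fun x hx => by
        have hx0 := hm.trans_le hx.1
        have := (abs_lt.1 (hIcc x hx)).2
        rw [sub_lt_iff_lt_add', div_lt_iff₀ hx0] at this
        linarith
    rw [hI] at hlower hupper
    have hεb : ε / (2 * b) * b = ε / 2 := by field_simp
    rw [Real.dist_eq, abs_lt]
    constructor <;> nlinarith
  refine ((Real.continuous_exp.tendsto _).comp hlog).congr' ?_
  filter_upwards [self_mem_nhdsWithin] with l (hl : 0 < l)
  exact Real.exp_log (div_pos hl (hu l hl).1)

section TailIntegral

variable {f : ℝ → ℝ}

lemma intervalIntegrable_of_antitoneOn_Ioi (hf : AntitoneOn f (Ioi 0)) {c d : ℝ} (hc : 0 < c)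
    (hd : 0 < d) : IntervalIntegrable f volume c d :=
  (hf.mono fun _ hx => lt_of_lt_of_le (lt_min hc hd) hx.1).intervalIntegrable

lemma integrableOn_Ioi_of_antitoneOn_Ioi (hf : AntitoneOn f (Ioi 0))
    (hf₁ : IntegrableOn f (Ici 1)) {w : ℝ} (hw : 0 < w) : IntegrableOn f (Ioi w) := by
  refine ((intervalIntegrable_of_antitoneOn_Ioi hf hw one_pos).def'.union hf₁).mono_set
    fun x (hx : w < x) => ?_
  rcases le_or_gt 1 x with h | h
  · exact Or.inr h
  · exact Or.inl ⟨(min_le_left w 1).trans_lt hx, h.le.trans (le_max_right w 1)⟩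

lemma strictAntiOn_integral_Ioi (hf : AntitoneOn f (Ioi 0)) (hpos : ∀ x > 0, 0 < f x)
    (hf₁ : IntegrableOn f (Ici 1)) : StrictAntiOn (fun w => ∫ x in Ioi w, f x) (Ioi 0) := by
  intro c (hc : 0 < c) d (hd : 0 < d) hcd
  dsimp only
  rw [← integral_interval_add_Ioi (integrableOn_Ioi_of_antitoneOn_Ioi hf hf₁ hc)
    (integrableOn_Ioi_of_antitoneOn_Ioi hf hf₁ hd)]
  have := intervalIntegral_pos_of_pos_on (intervalIntegrable_of_antitoneOn_Ioi hf hc hd)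
    (fun x hx => hpos x (hc.trans hx.1)) hcd
  linarith

lemma apply_eq_apply_apply_sub_of_integral (hf : AntitoneOn f (Ioi 0)) (hpos : ∀ x > 0, 0 < f x)
    (hf₁ : IntegrableOn f (Ici 1)) {u v : ℝ → ℝ} {a b : ℝ} (hb : 0 < b) (hab : b < a)
    (hu : ∀ l > 0, 0 < u l ∧ ∫ x in u l..l, f x = b)
    (hv : ∀ a > 0, 0 < v a ∧ ∫ x in Ioi (v a), f x = a) :
    v a = u (v (a - b)) := by
  obtain ⟨hva, hvaI⟩ := hv a (hb.trans hab)
  obtain ⟨hvab, hvabI⟩ := hv (a - b) (sub_pos.2 hab)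
  obtain ⟨hu0, huI⟩ := hu _ hvab
  refine (strictAntiOn_integral_Ioi hf hpos hf₁).injOn hva hu0 ?_
  rw [hvaI, ← integral_interval_add_Ioi (integrableOn_Ioi_of_antitoneOn_Ioi hf hf₁ hu0)
    (integrableOn_Ioi_of_antitoneOn_Ioi hf hf₁ hvab), huI, hvabI]
  ring

end TailIntegral

lemma tendsto_nhdsGT_zero_of_antitoneOn {T v : ℝ → ℝ} (hT : AntitoneOn T (Ioi 0))
    (hv : ∀ a > 0, 0 < v a ∧ T (v a) = a) : Tendsto v atTop (𝓝[>] 0) := by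
  refine tendsto_nhdsWithin_iff.2 ⟨tendsto_order.2 ⟨fun a' ha' => ?_, fun ε hε => ?_⟩, ?_⟩
  · filter_upwards [eventually_gt_atTop 0] with a ha
    exact ha'.trans (hv a ha).1
  · filter_upwards [eventually_gt_atTop (max 0 (T ε))] with a ha
    have ha0 : 0 < a := (le_max_left _ _).trans_lt ha
    by_contra! hvε
    have := hT hε (hv a ha0).1 hvε
    rw [(hv a ha0).2] at this
    exact (le_max_right 0 (T ε)).not_gt (ha.trans_le this)
  · filter_upwards [eventually_gt_atTop 0] with a ha
    exact (hv a ha).1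

/-- Let `ψ` be a (sub)critical branching mechanism satisfying
Grey's condition, `u(a,λ)` its cumulant semigroup and `v(a) = lim_{λ→∞} u(a,λ)`, i.e.
`0 < v(a)` and `∫_{v(a)}^∞ dx/ψ(x) = a`.  Then for fixed `b > 0`:
(i) `v(a) = u(b, v(a-b))` for all `a > b`;
(ii) `lim_{a→∞} v(a-b)/v(a) = e^{αb}`, where `α = ψ'(0)`. -/
theorem extinction_function_asymptotics
    (α β : ℝ) (hα : 0 ≤ α) (hβ : 0 ≤ β)
    (π : Measure ℝ) (hπsupp : π (Set.Iic 0) = 0)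
    (hπint : ∫⁻ r, ENNReal.ofReal (min r (r ^ 2)) ∂π ≠ ⊤)
    (ψ : ℝ → ℝ)
    (hψ : ∀ x, ψ x = α * x + β * x ^ 2 + ∫ r, (Real.exp (-x * r) - 1 + x * r) ∂π)
    (hpos : ∀ x > 0, 0 < ψ x)
    (hGrey : IntegrableOn (fun x => (ψ x)⁻¹) (Set.Ici 1))
    (u : ℝ → ℝ → ℝ)
    (hu : ∀ (a lam : ℝ), 0 ≤ a → 0 < lam →
      0 < u a lam ∧ u a lam ≤ lam ∧ (∫ x in (u a lam)..lam, (ψ x)⁻¹) = a)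
    (v : ℝ → ℝ)
    (hv : ∀ a > (0 : ℝ), 0 < v a ∧ (∫ x in Set.Ioi (v a), (ψ x)⁻¹) = a) :
    ∀ b > (0 : ℝ),
      (∀ a, b < a → v a = u b (v (a - b))) ∧
      Tendsto (fun a => v (a - b) / v a) atTop (𝓝 (Real.exp (α * b))) := by
  intro b hb
  obtain rfl : ψ = branchingMechanism α β π := funext hψ
  have hπpos : ∀ᵐ r ∂π, 0 < r := ae_iff.2 (by simpa [Iic, not_lt] using hπsupp)
  have hπint' : Integrable (fun r => min r (r ^ 2)) π :=
    (lintegral_ofReal_ne_top_iff_integrable (Continuous.aestronglyMeasurable (by fun_prop))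
      (hπpos.mono fun r hr => le_min hr.le (sq_nonneg r))).1 hπint
  have hanti : AntitoneOn (fun x => (branchingMechanism α β π x)⁻¹) (Ioi 0) :=
    fun x hx y hy hxy => inv_anti₀ (hpos x hx)
      (monotoneOn_branchingMechanism hα hβ hπpos hπint' (Ioi_subset_Ici_self hx)
        (Ioi_subset_Ici_self hy) hxy)
  have hinvpos : ∀ x > 0, 0 < (branchingMechanism α β π x)⁻¹ := fun x hx => inv_pos.2 (hpos x hx)
  have hsemigroup : ∀ a, b < a → v a = u b (v (a - b)) := fun a hab =>
    apply_eq_apply_apply_sub_of_integral hanti hinvpos hGrey hb hab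
      (fun l hl => ⟨(hu b l hb.le hl).1, (hu b l hb.le hl).2.2⟩) hv
  refine ⟨hsemigroup, ?_⟩
  have hvlim : Tendsto (fun a => v (a - b)) atTop (𝓝[>] 0) :=
    (tendsto_nhdsGT_zero_of_antitoneOn (strictAntiOn_integral_Ioi hanti hinvpos hGrey).antitoneOn
      hv).comp (tendsto_atTop_add_const_right _ _ tendsto_id)
  refine ((tendsto_div_of_integral_inv_eq hb hpos
    (fun m l hm hl => intervalIntegrable_of_antitoneOn_Ioi hanti hm hl)
    (tendsto_branchingMechanism_div_nhdsGT_zero hπpos hπint')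
    (fun l hl => hu b l hb.le hl)).comp hvlim).congr' ?_
  filter_upwards [eventually_gt_atTop b] with a ha
  simp only [Function.comp_apply, hsemigroup a ha]
end

section
/- Let ψ(λ) = α_0 λ + βλ² + ∫_{(0,∞)} π(dr)(e^{-λr} - 1 + λr 1_{r<1}) and ψ̃ be two spectrally positive Lévy exponents, and φ(λ) = κλ + ∫_{(0,∞)} ρ(dr)(1 - e^{-λr}) and φ̃ two subordinator exponents, with x > 0. Suppose x u(t,λ) + ∫_0^t φ(u(s,λ)) ds = x ũ(t,λ) + ∫_0^t φ̃(ũ(s,λ)) ds for all t, λ ≥ 0, where u, ũ solve ∂u/∂t = -ψ(u), ∂ũ/∂t = -ψ̃(ũ) with u(0,λ) = ũ(0,λ) = λ. If moreover it is not the case that ρ = π = 0, β = 0 and xα_0 = κ, then ψ = ψ̃ and φ = φ̃. -/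
/-!
Write `H = φ - x ψ`. Differentiating the identity in `t` gives `H (u t) = H̃ (ũ t)` for small `t`,
so `H = H̃` on `(0, ∞)`; differentiating once more at `t = 0`, along the flows `u' = -ψ (u)` and
`ũ' = -ψ̃ (ũ)`, gives `H' ψ = H̃' ψ̃`, hence `H' (ψ - ψ̃) = 0` since `H' = H̃'`. For `m₁ < m₂`,
`H' m₁ - H' m₂ = ∫ r (e^{-m₁ r} - e^{-m₂ r}) (ρ + x π)(dr) + 2 x β (m₂ - m₁) ≥ 0`, with equality
only if `ρ = π = 0` and `β = 0`, in which case `H' ≡ κ - x α₀`. So outside the degenerate case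
`H'` vanishes on no open interval, and continuity forces `ψ = ψ̃`, whence `φ = φ̃`.
-/

open MeasureTheory intervalIntegral
open scoped ENNReal
open Set Filter Topology
open Real (exp)

noncomputable def levyExponent (α β : ℝ) (π : Measure ℝ) (l : ℝ) : ℝ :=
  α * l + β * l ^ 2 + ∫ r, (exp (-l * r) - 1 + l * r * (if r < 1 then 1 else 0)) ∂π

noncomputable def levyExponentDeriv (α β : ℝ) (π : Measure ℝ) (l : ℝ) : ℝ :=
  α + 2 * β * l + ∫ r, r * ((if r < 1 then 1 else 0) - exp (-l * r)) ∂π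

noncomputable def subordinatorExponent (κ : ℝ) (ρ : Measure ℝ) (l : ℝ) : ℝ :=
  κ * l + ∫ r, (1 - exp (-l * r)) ∂ρ

noncomputable def subordinatorExponentDeriv (κ : ℝ) (ρ : Measure ℝ) (l : ℝ) : ℝ :=
  κ + ∫ r, r * exp (-l * r) ∂ρ

lemma mul_exp_neg_mul_le_inv {m : ℝ} (hm : 0 < m) (r : ℝ) : r * exp (-m * r) ≤ m⁻¹ := by
  have h := Real.add_one_le_exp (m * r)
  rw [neg_mul, Real.exp_neg, ← div_eq_mul_inv, div_le_iff₀ (Real.exp_pos _)]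
  calc r ≤ m⁻¹ * (m * r + 1) := by
        rw [mul_add, ← mul_assoc, inv_mul_cancel₀ hm.ne', one_mul]
        linarith [inv_pos.2 hm]
    _ ≤ m⁻¹ * exp (m * r) := by gcongr

lemma exp_neg_sub_one_add_le_sq {y : ℝ} (hy : 0 ≤ y) : exp (-y) - 1 + y ≤ y ^ 2 := by
  rcases le_or_gt y 1 with h | h
  · have := Real.abs_exp_sub_one_sub_id_le (x := -y) (by rwa [abs_neg, abs_of_nonneg hy])
    rw [neg_sq] at this
    linarith [(abs_le.1 this).2]
  · nlinarith [Real.exp_le_one_iff.2 (neg_nonpos.2 hy)]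

lemma abs_one_sub_exp_neg_mul_le {m r : ℝ} (hm : 0 ≤ m) (hr : 0 ≤ r) :
    |1 - exp (-m * r)| ≤ (m + 1) * min 1 r := by
  have h₁ : exp (-m * r) ≤ 1 := Real.exp_le_one_iff.2 (by nlinarith)
  have h₂ := Real.add_one_le_exp (-m * r)
  rw [abs_of_nonneg (by linarith)]
  rcases le_total r 1 with h | h
  · rw [min_eq_right h]; nlinarith
  · rw [min_eq_left h]; nlinarith [Real.exp_pos (-m * r)]

lemma mul_exp_neg_mul_le {c m r : ℝ} (hc : 0 < c) (hcm : c ≤ m) (hr : 0 ≤ r) :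
    r * exp (-m * r) ≤ (1 + c⁻¹) * min 1 r := by
  have h₁ : exp (-m * r) ≤ 1 := Real.exp_le_one_iff.2 (by nlinarith)
  have h₂ : m⁻¹ ≤ c⁻¹ := inv_anti₀ hc hcm
  rcases le_total r 1 with h | h
  · rw [min_eq_right h]; nlinarith [inv_pos.2 hc]
  · rw [min_eq_left h]; linarith [mul_exp_neg_mul_le_inv (hc.trans_le hcm) r]

lemma abs_levyIntegrand_le {m r : ℝ} (hm : 0 ≤ m) (hr : 0 ≤ r) :
    |exp (-m * r) - 1 + m * r * (if r < 1 then 1 else 0)| ≤ (m ^ 2 + 1) * min 1 (r ^ 2) := by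
  rcases lt_or_ge r 1 with h | h
  · have hmr : 0 ≤ m * r := mul_nonneg hm hr
    rw [if_pos h, mul_one, min_eq_right (by nlinarith), abs_of_nonneg
      (by linarith [Real.add_one_le_exp (-m * r)]), neg_mul]
    nlinarith [exp_neg_sub_one_add_le_sq hmr]
  · have h₁ : exp (-m * r) ≤ 1 := Real.exp_le_one_iff.2 (by nlinarith)
    rw [if_neg (not_lt.2 h), mul_zero, add_zero, min_eq_left (by nlinarith), abs_sub_comm,
      abs_of_nonneg (by linarith)]
    nlinarith [Real.exp_pos (-m * r)]

lemma abs_levyIntegrand_deriv_le {c m M r : ℝ} (hc : 0 < c) (hcm : c ≤ m) (hmM : m ≤ M)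
    (hr : 0 ≤ r) :
    |r * ((if r < 1 then 1 else 0) - exp (-m * r))| ≤ (M + c⁻¹) * min 1 (r ^ 2) := by
  have hm : 0 < m := hc.trans_le hcm
  have h₀ : 0 ≤ r * exp (-m * r) := by positivity
  rcases lt_or_ge r 1 with h | h
  · have h₁ := Real.add_one_le_exp (-m * r)
    have h₂ : exp (-m * r) ≤ 1 := Real.exp_le_one_iff.2 (by nlinarith)
    rw [if_pos h, min_eq_right (by nlinarith), abs_of_nonneg (by nlinarith)]
    nlinarith [inv_pos.2 hc]
  · rw [if_neg (not_lt.2 h), min_eq_left (by nlinarith), zero_sub, mul_neg, abs_neg,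
      abs_of_nonneg h₀]
    nlinarith [mul_exp_neg_mul_le_inv hm r, inv_anti₀ hc hcm]

section Integrability

variable {μ : Measure ℝ}

lemma ae_pos_of_measure_Iic_eq_zero (h : μ (Iic 0) = 0) : ∀ᵐ r ∂μ, 0 < r :=
  ae_iff.2 (measure_mono_null (fun _ => not_lt.1) h)

lemma integrable_min_one_sq (h : ∫⁻ r, ENNReal.ofReal (min 1 (r ^ 2)) ∂μ ≠ ∞) :
    Integrable (fun r => min 1 (r ^ 2)) μ :=
  (lintegral_ofReal_ne_top_iff_integrable (by fun_prop)
    (Eventually.of_forall fun r => le_min zero_le_one (sq_nonneg r))).1 h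

lemma integrable_min_one (hμ : μ (Iic 0) = 0) (h : ∫⁻ r, ENNReal.ofReal (min 1 r) ∂μ ≠ ∞) :
    Integrable (fun r => min 1 r) μ :=
  (lintegral_ofReal_ne_top_iff_integrable (by fun_prop)
    ((ae_pos_of_measure_Iic_eq_zero hμ).mono fun _ hr => le_min zero_le_one hr.le)).1 h

@[fun_prop]
lemma measurable_ite_lt_one : Measurable fun r : ℝ => if r < 1 then (1 : ℝ) else 0 :=
  Measurable.ite measurableSet_Iio measurable_const measurable_const

lemma integrable_mul_exp_neg_mul (hμ : μ (Iic 0) = 0)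
    (h : ∫⁻ r, ENNReal.ofReal (min 1 r) ∂μ ≠ ∞) {l : ℝ} (hl : 0 < l) :
    Integrable (fun r => r * exp (-l * r)) μ := by
  refine ((integrable_min_one hμ h).const_mul (1 + l⁻¹)).mono' (by fun_prop) ?_
  filter_upwards [ae_pos_of_measure_Iic_eq_zero hμ] with r hr
  rw [Real.norm_eq_abs, abs_of_nonneg (by positivity)]
  exact mul_exp_neg_mul_le hl le_rfl hr.le

lemma integrable_levyIntegrand_deriv (hμ : μ (Iic 0) = 0)
    (h : ∫⁻ r, ENNReal.ofReal (min 1 (r ^ 2)) ∂μ ≠ ∞) {l : ℝ} (hl : 0 < l) :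
    Integrable (fun r => r * ((if r < 1 then 1 else 0) - exp (-l * r))) μ := by
  refine ((integrable_min_one_sq h).const_mul (l + l⁻¹)).mono' (by fun_prop) ?_
  filter_upwards [ae_pos_of_measure_Iic_eq_zero hμ] with r hr
  exact abs_levyIntegrand_deriv_le hl le_rfl le_rfl hr.le

end Integrability

section Derivatives

variable {μ : Measure ℝ} {l : ℝ}

lemma hasDerivAt_integral_one_sub_exp (hμ : μ (Iic 0) = 0)
    (h : ∫⁻ r, ENNReal.ofReal (min 1 r) ∂μ ≠ ∞) (hl : 0 < l) :
    HasDerivAt (fun m => ∫ r, (1 - exp (-m * r)) ∂μ) (∫ r, r * exp (-l * r) ∂μ) l := by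
  have hpos := ae_pos_of_measure_Iic_eq_zero hμ
  refine (hasDerivAt_integral_of_dominated_loc_of_deriv_le
    (F' := fun m r => r * exp (-m * r)) (bound := fun r => (1 + (l / 2)⁻¹) * min 1 r)
    (Ioo_mem_nhds (half_lt_self hl) (lt_two_mul_self hl))
    (Eventually.of_forall fun m => by fun_prop)
    ?_ (by fun_prop) ?_ ((integrable_min_one hμ h).const_mul _) ?_).2
  · refine ((integrable_min_one hμ h).const_mul (l + 1)).mono' (by fun_prop) ?_
    exact hpos.mono fun r hr => abs_one_sub_exp_neg_mul_le hl.le hr.le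
  · filter_upwards [hpos] with r hr m hm
    rw [Real.norm_eq_abs, abs_of_nonneg (by positivity)]
    exact mul_exp_neg_mul_le (half_pos hl) hm.1.le hr.le
  · refine Eventually.of_forall fun r m _ => ?_
    exact (((hasDerivAt_neg m).mul_const r).exp.const_sub 1).congr_deriv (by ring)

lemma hasDerivAt_integral_levyIntegrand (hμ : μ (Iic 0) = 0)
    (h : ∫⁻ r, ENNReal.ofReal (min 1 (r ^ 2)) ∂μ ≠ ∞) (hl : 0 < l) :
    HasDerivAt (fun m => ∫ r, (exp (-m * r) - 1 + m * r * (if r < 1 then 1 else 0)) ∂μ)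
      (∫ r, r * ((if r < 1 then 1 else 0) - exp (-l * r)) ∂μ) l := by
  have hpos := ae_pos_of_measure_Iic_eq_zero hμ
  refine (hasDerivAt_integral_of_dominated_loc_of_deriv_le
    (F' := fun m r => r * ((if r < 1 then 1 else 0) - exp (-m * r)))
    (bound := fun r => (2 * l + (l / 2)⁻¹) * min 1 (r ^ 2))
    (Ioo_mem_nhds (half_lt_self hl) (lt_two_mul_self hl))
    (Eventually.of_forall fun m => by fun_prop)
    ?_ (by fun_prop) ?_ ((integrable_min_one_sq h).const_mul _) ?_).2
  · refine ((integrable_min_one_sq h).const_mul (l ^ 2 + 1)).mono' (by fun_prop) ?_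
    exact hpos.mono fun r hr => abs_levyIntegrand_le hl.le hr.le
  · filter_upwards [hpos] with r hr m hm
    exact abs_levyIntegrand_deriv_le (half_pos hl) hm.1.le hm.2.le hr.le
  · refine Eventually.of_forall fun r m _ => ?_
    have hlin : HasDerivAt (fun m => m * r * (if r < 1 then 1 else 0))
        (1 * r * (if r < 1 then 1 else 0)) m := ((hasDerivAt_id m).mul_const r).mul_const _
    exact ((((hasDerivAt_neg m).mul_const r).exp.sub_const 1).add hlin).congr_deriv (by ring)

lemma hasDerivAt_subordinatorExponent (κ : ℝ) {ρ : Measure ℝ} (hρ : ρ (Iic 0) = 0)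
    (h : ∫⁻ r, ENNReal.ofReal (min 1 r) ∂ρ ≠ ∞) (hl : 0 < l) :
    HasDerivAt (subordinatorExponent κ ρ) (subordinatorExponentDeriv κ ρ l) l :=
  (((hasDerivAt_id' l).const_mul κ).add (hasDerivAt_integral_one_sub_exp hρ h hl)).congr_deriv
    (by rw [mul_one, subordinatorExponentDeriv])

lemma hasDerivAt_levyExponent (α β : ℝ) {π : Measure ℝ} (hπ : π (Iic 0) = 0)
    (h : ∫⁻ r, ENNReal.ofReal (min 1 (r ^ 2)) ∂π ≠ ∞) (hl : 0 < l) :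
    HasDerivAt (levyExponent α β π) (levyExponentDeriv α β π l) l :=
  ((((hasDerivAt_id' l).const_mul α).add ((hasDerivAt_pow 2 l).const_mul β)).add
    (hasDerivAt_integral_levyIntegrand hπ h hl)).congr_deriv
    (by rw [levyExponentDeriv]; ring)

end Derivatives

section StrictAnti

variable {μ : Measure ℝ} {m₁ m₂ : ℝ}

lemma mul_exp_sub_exp_pos (hm : m₁ < m₂) {r : ℝ} (hr : 0 < r) :
    0 < r * (exp (-m₁ * r) - exp (-m₂ * r)) :=
  mul_pos hr (sub_pos.2 (Real.exp_lt_exp.2 (by nlinarith)))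

lemma integral_mul_exp_sub_exp_nonneg (hμ : μ (Iic 0) = 0) (hm : m₁ < m₂) :
    0 ≤ ∫ r, r * (exp (-m₁ * r) - exp (-m₂ * r)) ∂μ :=
  integral_nonneg_of_ae <|
    (ae_pos_of_measure_Iic_eq_zero hμ).mono fun _ hr => (mul_exp_sub_exp_pos hm hr).le

lemma eq_zero_of_integral_mul_exp_sub_exp_eq_zero (hμ : μ (Iic 0) = 0) (hm : m₁ < m₂)
    (hint : Integrable (fun r => r * (exp (-m₁ * r) - exp (-m₂ * r))) μ)
    (h : ∫ r, r * (exp (-m₁ * r) - exp (-m₂ * r)) ∂μ = 0) : μ = 0 := by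
  have hpos := ae_pos_of_measure_Iic_eq_zero hμ
  have hzero := (integral_eq_zero_iff_of_nonneg_ae
    (hpos.mono fun _ hr => (mul_exp_sub_exp_pos hm hr).le) hint).1 h
  have hfalse : ∀ᵐ r ∂μ, False := by
    filter_upwards [hpos, hzero] with r hr hr0
    exact (mul_exp_sub_exp_pos hm hr).ne' hr0
  exact ae_eq_bot.1 (eventually_false_iff_eq_bot.1 hfalse)

lemma subordinatorExponentDeriv_sub (κ : ℝ) (hμ : μ (Iic 0) = 0)
    (h : ∫⁻ r, ENNReal.ofReal (min 1 r) ∂μ ≠ ∞) (hm₁ : 0 < m₁) (hm : m₁ < m₂) :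
    subordinatorExponentDeriv κ μ m₁ - subordinatorExponentDeriv κ μ m₂
      = ∫ r, r * (exp (-m₁ * r) - exp (-m₂ * r)) ∂μ := by
  simp_rw [subordinatorExponentDeriv, add_sub_add_left_eq_sub, mul_sub]
  exact (integral_sub (integrable_mul_exp_neg_mul hμ h hm₁)
    (integrable_mul_exp_neg_mul hμ h (hm₁.trans hm))).symm

lemma levyExponentDeriv_sub (α β : ℝ) (hμ : μ (Iic 0) = 0)
    (h : ∫⁻ r, ENNReal.ofReal (min 1 (r ^ 2)) ∂μ ≠ ∞) (hm₁ : 0 < m₁) (hm : m₁ < m₂) :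
    levyExponentDeriv α β μ m₂ - levyExponentDeriv α β μ m₁
      = 2 * β * (m₂ - m₁) + ∫ r, r * (exp (-m₁ * r) - exp (-m₂ * r)) ∂μ := by
  have hI : ∫ r, r * (exp (-m₁ * r) - exp (-m₂ * r)) ∂μ
      = ∫ r, r * ((if r < 1 then 1 else 0) - exp (-m₂ * r)) ∂μ
        - ∫ r, r * ((if r < 1 then 1 else 0) - exp (-m₁ * r)) ∂μ := by
    rw [← integral_sub (integrable_levyIntegrand_deriv hμ h (hm₁.trans hm))
      (integrable_levyIntegrand_deriv hμ h hm₁)]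
    congr 1 with r
    ring
  rw [levyExponentDeriv, levyExponentDeriv, hI]
  ring

variable {x α β κ : ℝ} {ρ π : Measure ℝ}

lemma eq_zero_of_deriv_sub_mul_deriv_eq (hx : 0 < x) (hβ : 0 ≤ β) (hρ : ρ (Iic 0) = 0)
    (hρint : ∫⁻ r, ENNReal.ofReal (min 1 r) ∂ρ ≠ ∞) (hπ : π (Iic 0) = 0)
    (hπint : ∫⁻ r, ENNReal.ofReal (min 1 (r ^ 2)) ∂π ≠ ∞) (hm₁ : 0 < m₁) (hm : m₁ < m₂)
    (h : subordinatorExponentDeriv κ ρ m₁ - x * levyExponentDeriv α β π m₁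
      = subordinatorExponentDeriv κ ρ m₂ - x * levyExponentDeriv α β π m₂) :
    ρ = 0 ∧ π = 0 ∧ β = 0 := by
  have hsub₁ := subordinatorExponentDeriv_sub κ hρ hρint hm₁ hm
  have hsub₂ := levyExponentDeriv_sub α β hπ hπint hm₁ hm
  have hI₁ := integral_mul_exp_sub_exp_nonneg hρ hm
  have hI₂ := integral_mul_exp_sub_exp_nonneg hπ hm
  have hβm : 0 ≤ β * (m₂ - m₁) := mul_nonneg hβ (sub_nonneg.2 hm.le)
  have hsum : (∫ r, r * (exp (-m₁ * r) - exp (-m₂ * r)) ∂ρ)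
      + x * (2 * β * (m₂ - m₁) + ∫ r, r * (exp (-m₁ * r) - exp (-m₂ * r)) ∂π) = 0 := by
    linear_combination h - hsub₁ - x * hsub₂
  have hπpart : 2 * β * (m₂ - m₁) + ∫ r, r * (exp (-m₁ * r) - exp (-m₂ * r)) ∂π = 0 :=
    (mul_eq_zero.1 (by nlinarith)).resolve_left hx.ne'
  refine ⟨eq_zero_of_integral_mul_exp_sub_exp_eq_zero hρ hm ?_ (by nlinarith),
    eq_zero_of_integral_mul_exp_sub_exp_eq_zero hπ hm ?_ (by linarith),
    (mul_eq_zero.1 (by linarith : β * (m₂ - m₁) = 0)).resolve_right (sub_ne_zero.2 hm.ne')⟩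
  · exact ((integrable_mul_exp_neg_mul hρ hρint hm₁).sub
      (integrable_mul_exp_neg_mul hρ hρint (hm₁.trans hm))).congr
      (Eventually.of_forall fun r => by simp only [Pi.sub_apply]; ring)
  · exact ((integrable_levyIntegrand_deriv hπ hπint (hm₁.trans hm)).sub
      (integrable_levyIntegrand_deriv hπ hπint hm₁)).congr
      (Eventually.of_forall fun r => by simp only [Pi.sub_apply]; ring)

lemma not_eventually_deriv_sub_mul_deriv_eq_zero {l : ℝ} (hx : 0 < x) (hβ : 0 ≤ β)
    (hρ : ρ (Iic 0) = 0) (hρint : ∫⁻ r, ENNReal.ofReal (min 1 r) ∂ρ ≠ ∞) (hπ : π (Iic 0) = 0)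
    (hπint : ∫⁻ r, ENNReal.ofReal (min 1 (r ^ 2)) ∂π ≠ ∞)
    (hnondeg : ¬ (ρ = 0 ∧ π = 0 ∧ β = 0 ∧ x * α = κ)) (hl : 0 < l) :
    ¬ ∀ᶠ m in 𝓝 l, subordinatorExponentDeriv κ ρ m - x * levyExponentDeriv α β π m = 0 := by
  intro h
  obtain ⟨m, hm, hlm⟩ :=
    ((h.filter_mono nhdsWithin_le_nhds).and (self_mem_nhdsWithin (s := Ioi l))).exists
  obtain ⟨rfl, rfl, rfl⟩ :=
    eq_zero_of_deriv_sub_mul_deriv_eq hx hβ hρ hρint hπ hπint hl hlm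
      (h.self_of_nhds.trans hm.symm)
  have hl0 := h.self_of_nhds
  simp only [subordinatorExponentDeriv, levyExponentDeriv, integral_zero_measure] at hl0
  exact hnondeg ⟨rfl, rfl, rfl, by linarith⟩

end StrictAnti

lemma HasDerivWithinAt.unique_of_eventuallyEq_nhdsGE {f g : ℝ → ℝ} {f' g' t : ℝ}
    (hf : HasDerivWithinAt f f' (Ici t) t) (hg : HasDerivWithinAt g g' (Ici t) t)
    (h : f =ᶠ[𝓝[≥] t] g) : f' = g' :=
  (uniqueDiffWithinAt_Ici t).eq_deriv _ hf
    (hg.congr_of_eventuallyEq h (h.eq_of_nhdsWithin self_mem_Ici))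

lemma hasDerivWithinAt_integral_Ici_of_continuousOn {g : ℝ → ℝ} {a b t : ℝ}
    (hg : ContinuousOn g (Icc a b)) (ht : t ∈ Ico a b) :
    HasDerivWithinAt (fun t => ∫ s in a..t, g s) (g t) (Ici t) t := by
  have hmem : Icc a b ∈ 𝓝[>] t := Icc_mem_nhdsGT_of_mem ht
  have hsub : uIcc a t ⊆ Icc a b :=
    uIcc_subset_Icc (left_mem_Icc.2 (ht.1.trans ht.2.le)) (Ico_subset_Icc_self ht)
  exact integral_hasDerivWithinAt_right ((hg.mono hsub).intervalIntegrable)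
    ((hg.stronglyMeasurableAtFilter_nhdsWithin measurableSet_Icc t).filter_mono
      (nhdsWithin_le_of_mem hmem))
    ((hg t (Ico_subset_Icc_self ht)).mono_of_mem_nhdsWithin hmem)

lemma eventuallyEq_sub_mul_of_integral_identity {x : ℝ} {ψ₁ ψ₂ φ₁ φ₂ u₁ u₂ : ℝ → ℝ} {U : Set ℝ}
    (hU₁ : U ∈ 𝓝 (u₁ 0)) (hU₂ : U ∈ 𝓝 (u₂ 0)) (hφ₁ : ContinuousOn φ₁ U)
    (hφ₂ : ContinuousOn φ₂ U) (hu₁ : ∀ t ≥ 0, HasDerivWithinAt u₁ (-ψ₁ (u₁ t)) (Ici 0) t)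
    (hu₂ : ∀ t ≥ 0, HasDerivWithinAt u₂ (-ψ₂ (u₂ t)) (Ici 0) t)
    (hid : ∀ t ≥ 0, x * u₁ t + ∫ s in 0..t, φ₁ (u₁ s) = x * u₂ t + ∫ s in 0..t, φ₂ (u₂ s)) :
    (fun t => φ₁ (u₁ t) - x * ψ₁ (u₁ t)) =ᶠ[𝓝[≥] 0] fun t => φ₂ (u₂ t) - x * ψ₂ (u₂ t) := by
  have hc₁ : ContinuousOn u₁ (Ici 0) := fun t ht => (hu₁ t ht).continuousWithinAt
  have hc₂ : ContinuousOn u₂ (Ici 0) := fun t ht => (hu₂ t ht).continuousWithinAt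
  obtain ⟨ε, hε, hsub⟩ := mem_nhdsGE_iff_exists_Icc_subset.1
    (inter_mem (hc₁ 0 self_mem_Ici hU₁) (hc₂ 0 self_mem_Ici hU₂))
  have hIcc : Icc 0 ε ⊆ Ici 0 := Icc_subset_Ici_self
  have hg₁ : ContinuousOn (fun s => φ₁ (u₁ s)) (Icc 0 ε) :=
    hφ₁.comp (hc₁.mono hIcc) fun s hs => (hsub hs).1
  have hg₂ : ContinuousOn (fun s => φ₂ (u₂ s)) (Icc 0 ε) :=
    hφ₂.comp (hc₂.mono hIcc) fun s hs => (hsub hs).2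
  filter_upwards [Ico_mem_nhdsGE hε] with t ht
  have hIci : Ici t ⊆ Ici 0 := Ici_subset_Ici.2 ht.1
  have hd := HasDerivWithinAt.unique_of_eventuallyEq_nhdsGE
    ((((hu₁ t ht.1).mono hIci).const_mul x).add
      (hasDerivWithinAt_integral_Ici_of_continuousOn hg₁ ht))
    ((((hu₂ t ht.1).mono hIci).const_mul x).add
      (hasDerivWithinAt_integral_Ici_of_continuousOn hg₂ ht))
    (eventually_nhdsWithin_of_forall fun s hs => hid s (ht.1.trans hs))
  linarith

lemma eqOn_of_mul_sub_eq_zero {X : Type*} [TopologicalSpace X] {f g D : X → ℝ} {s : Set X}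
    (hs : IsOpen s) (hf : ContinuousOn f s) (hg : ContinuousOn g s)
    (h : ∀ l ∈ s, D l * (f l - g l) = 0) (hD : ∀ l ∈ s, ¬ ∀ᶠ m in 𝓝 l, D m = 0) :
    EqOn f g s := by
  intro l hl
  by_contra hne
  refine hD l hl ?_
  have hc : ContinuousAt (fun m => f m - g m) l := (hf.sub hg).continuousAt (hs.mem_nhds hl)
  filter_upwards [hc.eventually_ne (sub_ne_zero.2 hne), hs.mem_nhds hl] with m hm hms
  exact (mul_eq_zero.1 (h m hms)).resolve_right hm

lemma sub_mul_eq_and_deriv_mul_eq_of_integral_identity {x l D₁ D₂ : ℝ}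
    {ψ₁ ψ₂ φ₁ φ₂ u₁ u₂ : ℝ → ℝ} {U : Set ℝ} (hU : U ∈ 𝓝 l) (hφ₁ : ContinuousOn φ₁ U)
    (hφ₂ : ContinuousOn φ₂ U) (hH₁ : HasDerivAt (fun m => φ₁ m - x * ψ₁ m) D₁ l)
    (hH₂ : HasDerivAt (fun m => φ₂ m - x * ψ₂ m) D₂ l) (h₁0 : u₁ 0 = l) (h₂0 : u₂ 0 = l)
    (hu₁ : ∀ t ≥ 0, HasDerivWithinAt u₁ (-ψ₁ (u₁ t)) (Ici 0) t)
    (hu₂ : ∀ t ≥ 0, HasDerivWithinAt u₂ (-ψ₂ (u₂ t)) (Ici 0) t)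
    (hid : ∀ t ≥ 0, x * u₁ t + ∫ s in 0..t, φ₁ (u₁ s) = x * u₂ t + ∫ s in 0..t, φ₂ (u₂ s)) :
    φ₁ l - x * ψ₁ l = φ₂ l - x * ψ₂ l ∧ D₁ * ψ₁ l = D₂ * ψ₂ l := by
  subst h₁0
  have hev := eventuallyEq_sub_mul_of_integral_identity hU (h₂0 ▸ hU) hφ₁ hφ₂ hu₁ hu₂ hid
  have hd := (hH₁.comp_hasDerivWithinAt 0 (hu₁ 0 le_rfl)).unique_of_eventuallyEq_nhdsGE
    ((h₂0 ▸ hH₂).comp_hasDerivWithinAt 0 (hu₂ 0 le_rfl)) hev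
  have h0 := hev.eq_of_nhdsWithin self_mem_Ici
  simp only [h₂0] at hd h0
  exact ⟨h0, by linarith⟩

theorem eqOn_Ioi_of_integral_identity {x : ℝ} {ψ₁ ψ₂ φ₁ φ₂ dψ₁ dψ₂ dφ₁ dφ₂ : ℝ → ℝ}
    {u₁ u₂ : ℝ → ℝ → ℝ}
    (hψ₁ : ∀ l > 0, HasDerivAt ψ₁ (dψ₁ l) l) (hψ₂ : ∀ l > 0, HasDerivAt ψ₂ (dψ₂ l) l)
    (hφ₁ : ∀ l > 0, HasDerivAt φ₁ (dφ₁ l) l) (hφ₂ : ∀ l > 0, HasDerivAt φ₂ (dφ₂ l) l)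
    (hu₁ : ∀ l > 0, u₁ 0 l = l ∧
      ∀ t ≥ 0, HasDerivWithinAt (fun t => u₁ t l) (-ψ₁ (u₁ t l)) (Ici 0) t)
    (hu₂ : ∀ l > 0, u₂ 0 l = l ∧
      ∀ t ≥ 0, HasDerivWithinAt (fun t => u₂ t l) (-ψ₂ (u₂ t l)) (Ici 0) t)
    (hid : ∀ l > 0, ∀ t ≥ 0,
      x * u₁ t l + ∫ s in 0..t, φ₁ (u₁ s l) = x * u₂ t l + ∫ s in 0..t, φ₂ (u₂ s l))
    (hD : ∀ l > 0, ¬ ∀ᶠ m in 𝓝 l, dφ₁ m - x * dψ₁ m = 0) :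
    EqOn ψ₁ ψ₂ (Ioi 0) ∧ EqOn φ₁ φ₂ (Ioi 0) := by
  have hcont {f df : ℝ → ℝ} (hf : ∀ l > 0, HasDerivAt f (df l) l) : ContinuousOn f (Ioi 0) :=
    fun l hl => (hf l hl).continuousAt.continuousWithinAt
  have hH₁ (l : ℝ) (hl : 0 < l) : HasDerivAt (fun m => φ₁ m - x * ψ₁ m) (dφ₁ l - x * dψ₁ l) l :=
    (hφ₁ l hl).sub ((hψ₁ l hl).const_mul x)
  have hH₂ (l : ℝ) (hl : 0 < l) : HasDerivAt (fun m => φ₂ m - x * ψ₂ m) (dφ₂ l - x * dψ₂ l) l :=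
    (hφ₂ l hl).sub ((hψ₂ l hl).const_mul x)
  have hlocal (l : ℝ) (hl : 0 < l) : φ₁ l - x * ψ₁ l = φ₂ l - x * ψ₂ l ∧
      (dφ₁ l - x * dψ₁ l) * ψ₁ l = (dφ₂ l - x * dψ₂ l) * ψ₂ l :=
    sub_mul_eq_and_deriv_mul_eq_of_integral_identity
    (Ioi_mem_nhds hl) (hcont hφ₁) (hcont hφ₂) (hH₁ l hl) (hH₂ l hl) (hu₁ l hl).1 (hu₂ l hl).1
    (hu₁ l hl).2 (hu₂ l hl).2 (hid l hl)
  have hDeq (l : ℝ) (hl : 0 < l) : dφ₁ l - x * dψ₁ l = dφ₂ l - x * dψ₂ l :=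
    (hH₁ l hl).unique ((hH₂ l hl).congr_of_eventuallyEq
      (eventually_of_mem (Ioi_mem_nhds hl) fun m hm => (hlocal m hm).1))
  have hψ : EqOn ψ₁ ψ₂ (Ioi 0) := eqOn_of_mul_sub_eq_zero isOpen_Ioi (hcont hψ₁) (hcont hψ₂)
    (fun l hl => by linear_combination (hlocal l hl).2 - ψ₂ l * hDeq l hl) hD
  refine ⟨hψ, fun l hl => ?_⟩
  have h := (hlocal l hl).1
  rw [hψ hl] at h
  linarith

theorem limiting_mechanisms_unique_general
    (x : ℝ) (hx : 0 < x)
    (α₀ α₀' : ℝ) (β β' : ℝ) (hβ : 0 ≤ β)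
    (κ κ' : ℝ)
    (π π' ρ ρ' : Measure ℝ)
    (hπsupp : π (Set.Iic 0) = 0) (hπ'supp : π' (Set.Iic 0) = 0)
    (hρsupp : ρ (Set.Iic 0) = 0) (hρ'supp : ρ' (Set.Iic 0) = 0)
    (hπint : ∫⁻ r, ENNReal.ofReal (min 1 (r ^ 2)) ∂π ≠ ⊤)
    (hπ'int : ∫⁻ r, ENNReal.ofReal (min 1 (r ^ 2)) ∂π' ≠ ⊤)
    (hρint : ∫⁻ r, ENNReal.ofReal (min 1 r) ∂ρ ≠ ⊤)
    (hρ'int : ∫⁻ r, ENNReal.ofReal (min 1 r) ∂ρ' ≠ ⊤)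
    (ψ ψt φ φt : ℝ → ℝ)
    (hψ : ∀ l, ψ l = α₀ * l + β * l ^ 2 +
      ∫ r, (Real.exp (-l * r) - 1 + l * r * (if r < 1 then 1 else 0)) ∂π)
    (hψt : ∀ l, ψt l = α₀' * l + β' * l ^ 2 +
      ∫ r, (Real.exp (-l * r) - 1 + l * r * (if r < 1 then 1 else 0)) ∂π')
    (hφ : ∀ l, φ l = κ * l + ∫ r, (1 - Real.exp (-l * r)) ∂ρ)
    (hφt : ∀ l, φt l = κ' * l + ∫ r, (1 - Real.exp (-l * r)) ∂ρ')
    (u ut : ℝ → ℝ → ℝ)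
    (hu : ∀ lam ≥ (0 : ℝ), u 0 lam = lam ∧
      ∀ t ≥ (0 : ℝ), HasDerivWithinAt (fun t => u t lam) (-ψ (u t lam)) (Set.Ici 0) t)
    (hut : ∀ lam ≥ (0 : ℝ), ut 0 lam = lam ∧
      ∀ t ≥ (0 : ℝ),
        HasDerivWithinAt (fun t => ut t lam) (-ψt (ut t lam)) (Set.Ici 0) t)
    (hid : ∀ t lam : ℝ, 0 ≤ t → 0 ≤ lam →
      x * u t lam + (∫ s in (0 : ℝ)..t, φ (u s lam))
        = x * ut t lam + (∫ s in (0 : ℝ)..t, φt (ut s lam)))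
    (hnondeg : ¬ (ρ = 0 ∧ π = 0 ∧ β = 0 ∧ x * α₀ = κ)) :
    (∀ lam ≥ (0 : ℝ), ψ lam = ψt lam) ∧ (∀ lam ≥ (0 : ℝ), φ lam = φt lam) := by
  obtain rfl : ψ = levyExponent α₀ β π := funext hψ
  obtain rfl : ψt = levyExponent α₀' β' π' := funext hψt
  obtain rfl : φ = subordinatorExponent κ ρ := funext hφ
  obtain rfl : φt = subordinatorExponent κ' ρ' := funext hφt
  obtain ⟨hψeq, hφeq⟩ := eqOn_Ioi_of_integral_identity
    (fun l => hasDerivAt_levyExponent α₀ β hπsupp hπint)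
    (fun l => hasDerivAt_levyExponent α₀' β' hπ'supp hπ'int)
    (fun l => hasDerivAt_subordinatorExponent κ hρsupp hρint)
    (fun l => hasDerivAt_subordinatorExponent κ' hρ'supp hρ'int)
    (fun l hl => hu l hl.le) (fun l hl => hut l hl.le) (fun l hl t ht => hid t l ht hl.le)
    (fun l => not_eventually_deriv_sub_mul_deriv_eq_zero hx hβ hρsupp hρint hπsupp hπint hnondeg)
  refine ⟨fun l hl => ?_, fun l hl => ?_⟩ <;> rcases hl.eq_or_lt with rfl | hl
  · simp [levyExponent]
  · exact hψeq hl
  · simp [subordinatorExponent]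
  · exact hφeq hl

/-- uniqueness of the limiting mechanisms.  Let
`ψ(λ) = α₀λ + βλ² + ∫ π(dr)(e^{-λr} - 1 + λr·1_{r<1})` and `ψ̃` be two spectrally
positive Lévy exponents, `φ(λ) = κλ + ∫ ρ(dr)(1 - e^{-λr})` and `φ̃` two subordinator
exponents, `x > 0`, and let `u, ũ` solve `∂u/∂t = -ψ(u)`, `∂ũ/∂t = -ψ̃(ũ)` with
`u(0,λ) = ũ(0,λ) = λ`.  If
`x·u(t,λ) + ∫_0^t φ(u(s,λ))ds = x·ũ(t,λ) + ∫_0^t φ̃(ũ(s,λ))ds` for all `t, λ ≥ 0`,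
and if it is not the case that `ρ = π = 0`, `β = 0` and `xα₀ = κ`, then `ψ = ψ̃` and
`φ = φ̃`. -/
theorem limiting_mechanisms_unique
    (x : ℝ) (hx : 0 < x)
    (α₀ α₀' : ℝ) (β β' : ℝ) (hβ : 0 ≤ β) (hβ' : 0 ≤ β')
    (κ κ' : ℝ) (hκ : 0 ≤ κ) (hκ' : 0 ≤ κ')
    (π π' ρ ρ' : Measure ℝ)
    (hπsupp : π (Set.Iic 0) = 0) (hπ'supp : π' (Set.Iic 0) = 0)
    (hρsupp : ρ (Set.Iic 0) = 0) (hρ'supp : ρ' (Set.Iic 0) = 0)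
    (hπint : ∫⁻ r, ENNReal.ofReal (min 1 (r ^ 2)) ∂π ≠ ⊤)
    (hπ'int : ∫⁻ r, ENNReal.ofReal (min 1 (r ^ 2)) ∂π' ≠ ⊤)
    (hρint : ∫⁻ r, ENNReal.ofReal (min 1 r) ∂ρ ≠ ⊤)
    (hρ'int : ∫⁻ r, ENNReal.ofReal (min 1 r) ∂ρ' ≠ ⊤)
    (ψ ψt φ φt : ℝ → ℝ)
    (hψ : ∀ l, ψ l = α₀ * l + β * l ^ 2 +
      ∫ r, (Real.exp (-l * r) - 1 + l * r * (if r < 1 then 1 else 0)) ∂π)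
    (hψt : ∀ l, ψt l = α₀' * l + β' * l ^ 2 +
      ∫ r, (Real.exp (-l * r) - 1 + l * r * (if r < 1 then 1 else 0)) ∂π')
    (hφ : ∀ l, φ l = κ * l + ∫ r, (1 - Real.exp (-l * r)) ∂ρ)
    (hφt : ∀ l, φt l = κ' * l + ∫ r, (1 - Real.exp (-l * r)) ∂ρ')
    (u ut : ℝ → ℝ → ℝ)
    (hu : ∀ lam ≥ (0 : ℝ), u 0 lam = lam ∧
      ∀ t ≥ (0 : ℝ), HasDerivWithinAt (fun t => u t lam) (-ψ (u t lam)) (Set.Ici 0) t)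
    (hut : ∀ lam ≥ (0 : ℝ), ut 0 lam = lam ∧
      ∀ t ≥ (0 : ℝ),
        HasDerivWithinAt (fun t => ut t lam) (-ψt (ut t lam)) (Set.Ici 0) t)
    (hid : ∀ t lam : ℝ, 0 ≤ t → 0 ≤ lam →
      x * u t lam + (∫ s in (0 : ℝ)..t, φ (u s lam))
        = x * ut t lam + (∫ s in (0 : ℝ)..t, φt (ut s lam)))
    (hnondeg : ¬ (ρ = 0 ∧ π = 0 ∧ β = 0 ∧ x * α₀ = κ)) :
    (∀ lam ≥ (0 : ℝ), ψ lam = ψt lam) ∧ (∀ lam ≥ (0 : ℝ), φ lam = φt lam) :=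
  limiting_mechanisms_unique_general x hx α₀ α₀' β β' hβ κ κ' π π' ρ ρ' hπsupp hπ'supp hρsupp
    hρ'supp hπint hπ'int hρint hρ'int ψ ψt φ φt hψ hψt hφ hφt u ut hu hut hid hnondeg
end
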